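/- arXiv:math/9908066 — 8 statements merged into one kernel-verified Lean document; each statement's English description precedes it below -/
import Mathlib

section
/- For every class-K∞ function γ there exists a class-K∞ function σ such that γ(r·s) ≤ σ(r)·σ(s) for all r, s ≥ 0. -/
/-!
In logarithmic coordinates `g u = log (γ (exp u))` and `T = log ∘ σ ∘ exp`, the inequality
`γ (r * s) ≤ σ r * σ s` reads `g (a + b) ≤ T a + T b`. This holds as soon as `T` dominates a
convex majorant `τ` of `u ↦ g (2 * u) / 2`, by midpoint convexity of `τ`. Since `g` is monotone
and tends to `-∞` at `-∞`, such a `τ` with the same behaviour at `-∞` is a supremum of affine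
functions with nonnegative slopes, the slopes tending to `0` on the left.
-/

/-- A function of class `K`: continuous, strictly increasing on `[0,∞)`, zero at zero. -/
def ClassK (f : ℝ → ℝ) : Prop :=
  ContinuousOn f (Set.Ici 0) ∧ StrictMonoOn f (Set.Ici 0) ∧ f 0 = 0

/-- A function of class `K∞`: class `K` and unbounded. -/
def ClassKInf (f : ℝ → ℝ) : Prop :=
  ClassK f ∧ Filter.Tendsto f Filter.atTop Filter.atTop

/-- A function of class `KL`. -/
def ClassKL (β : ℝ → ℝ → ℝ) : Prop :=
  (∀ t, 0 ≤ t → ClassK (fun r => β r t)) ∧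
  (∀ r, 0 ≤ r → AntitoneOn (fun t => β r t) (Set.Ici 0) ∧
    Filter.Tendsto (fun t => β r t) Filter.atTop (nhds 0))

open Real Filter Set Topology

section AffineSup

variable {ι : Type*} {a c : ι → ℝ}

variable (a c) in
noncomputable def affineSup (u : ℝ) : ℝ := ⨆ i, a i + c i * u

theorem le_affineSup (hbdd : ∀ u, BddAbove (range fun i => a i + c i * u)) (i : ι) (u : ℝ) :
    a i + c i * u ≤ affineSup a c u :=
  le_ciSup (hbdd u) i

theorem convexOn_affineSup [Nonempty ι] (hbdd : ∀ u, BddAbove (range fun i => a i + c i * u)) :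
    ConvexOn ℝ univ (affineSup a c) := by
  refine ⟨convex_univ, fun x _ y _ s t hs ht hst => ciSup_le fun i => ?_⟩
  calc a i + c i * (s • x + t • y) = s * (a i + c i * x) + t * (a i + c i * y) := by
        simp only [smul_eq_mul]; linear_combination (-a i) * hst
    _ ≤ s • affineSup a c x + t • affineSup a c y := by
        simp only [smul_eq_mul]; gcongr <;> exact le_affineSup hbdd i _

theorem monotone_affineSup [Nonempty ι] (hc : ∀ i, 0 ≤ c i)
    (hbdd : ∀ u, BddAbove (range fun i => a i + c i * u)) : Monotone (affineSup a c) :=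
  fun _ v huv => ciSup_le fun i =>
    (add_le_add_right (mul_le_mul_of_nonneg_left huv (hc i)) _).trans (le_affineSup hbdd i v)

end AffineSup

section ConvexMajorant

variable {g : ℝ → ℝ}

/-- For monotone `g` the `n`-th line lies above `g` on `[-(n + 1), -n]`; the slopes tend to `0`,
which keeps the supremum finite. -/
noncomputable def leftMajorant (g : ℝ → ℝ) : ℝ → ℝ :=
  affineSup (fun n : ℕ => g (-n) + 1) (fun n => ((n : ℝ) + 1)⁻¹)

theorem bddAbove_leftMajorant_lines (hg : Monotone g) (u : ℝ) :
    BddAbove (range fun n : ℕ => g (-n) + 1 + ((n : ℝ) + 1)⁻¹ * u) := by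
  refine ⟨g 0 + 1 + |u|, forall_mem_range.2 fun n => ?_⟩
  have hgn : g (-n) ≤ g 0 := hg (neg_nonpos.2 n.cast_nonneg)
  have hslope : ((n : ℝ) + 1)⁻¹ * u ≤ |u| :=
    calc ((n : ℝ) + 1)⁻¹ * u ≤ ((n : ℝ) + 1)⁻¹ * |u| := by gcongr; exact le_abs_self u
      _ ≤ |u| := mul_le_of_le_one_left (abs_nonneg u)
          (inv_le_one_of_one_le₀ (by linarith [n.cast_nonneg (α := ℝ)]))
  linarith

theorem le_leftMajorant (hg : Monotone g) {u : ℝ} (hu : u ≤ 0) : g u ≤ leftMajorant g u := by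
  set n := ⌊-u⌋₊
  have hn : (n : ℝ) ≤ -u := Nat.floor_le (neg_nonneg.2 hu)
  have hn' : -u < n + 1 := Nat.lt_floor_add_one _
  have hslope : -1 ≤ ((n : ℝ) + 1)⁻¹ * u := by
    rw [inv_mul_eq_div, le_div_iff₀ (by positivity)]; linarith
  calc g u ≤ g (-n) := hg (by linarith)
    _ ≤ g (-n) + 1 + ((n : ℝ) + 1)⁻¹ * u := by linarith
    _ ≤ leftMajorant g u := le_affineSup (bddAbove_leftMajorant_lines hg) n u

theorem leftMajorant_le_max (hg : Monotone g) (N : ℕ) {u : ℝ} (hu : u ≤ 0) :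
    leftMajorant g u ≤ max (g (-N) + 1) (g 0 + 1 + u / (N + 1)) := by
  refine ciSup_le fun n => ?_
  rcases le_total N n with hNn | hnN
  · have hgn : g (-n) ≤ g (-N) := hg (by simpa using hNn)
    have : ((n : ℝ) + 1)⁻¹ * u ≤ 0 := mul_nonpos_of_nonneg_of_nonpos (by positivity) hu
    exact le_max_of_le_left (by linarith)
  · have hgn : g (-n) ≤ g 0 := hg (neg_nonpos.2 n.cast_nonneg)
    have : ((n : ℝ) + 1)⁻¹ * u ≤ u / (N + 1) := by
      rw [inv_mul_eq_div, div_le_div_iff₀ (by positivity) (by positivity)]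
      exact mul_le_mul_of_nonpos_left (by gcongr) hu
    exact le_max_of_le_right (by linarith)

theorem tendsto_leftMajorant_atBot (hg : Monotone g) (hbot : Tendsto g atBot atBot) :
    Tendsto (leftMajorant g) atBot atBot := by
  refine tendsto_atBot.2 fun K => ?_
  have hlines : Tendsto (fun N : ℕ => g (-N)) atTop atBot :=
    hbot.comp (tendsto_neg_atTop_atBot.comp tendsto_natCast_atTop_atTop)
  obtain ⟨N, hN⟩ := (hlines.eventually (eventually_le_atBot (K - 1))).exists
  filter_upwards [eventually_le_atBot 0, eventually_le_atBot ((K - g 0 - 1) * (N + 1))]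
    with u hu hK
  have : u / (N + 1) ≤ K - g 0 - 1 := by rw [div_le_iff₀ (by positivity)]; exact hK
  exact (leftMajorant_le_max hg N hu).trans (max_le (by linarith) (by linarith))

noncomputable def rightSlope (g : ℝ → ℝ) (n : ℕ) : ℝ := max (g (n + 1)) 0 + 1

/-- For monotone `g` the `n`-th line lies above `g` on `[n, n + 1]` and vanishes at `n - 1`. -/
noncomputable def rightMajorant (g : ℝ → ℝ) : ℝ → ℝ :=
  affineSup (fun n : ℕ => rightSlope g n * (1 - n)) (rightSlope g)

theorem one_le_rightSlope (n : ℕ) : 1 ≤ rightSlope g n :=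
  le_add_of_nonneg_left (le_max_right _ _)

theorem rightSlope_line_eq (n : ℕ) (u : ℝ) :
    rightSlope g n * (1 - n) + rightSlope g n * u = rightSlope g n * (u + 1 - n) := by
  ring

theorem bddAbove_rightMajorant_lines (hg : Monotone g) (u : ℝ) :
    BddAbove (range fun n : ℕ => rightSlope g n * (1 - n) + rightSlope g n * u) := by
  set B := max (g (u + 2)) 0 + 1 with hB_def
  refine ⟨B * |u + 1|, forall_mem_range.2 fun n => ?_⟩
  simp only [rightSlope_line_eq]
  rcases le_or_gt (n : ℝ) (u + 1) with hn | hn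
  · have hslope : rightSlope g n ≤ B := by
      rw [hB_def, rightSlope]; gcongr; exact hg (by linarith)
    calc rightSlope g n * (u + 1 - n) ≤ B * (u + 1 - n) := by gcongr
      _ ≤ B * |u + 1| := by gcongr; linarith [le_abs_self (u + 1)]
  · exact (mul_nonpos_of_nonneg_of_nonpos (by linarith [one_le_rightSlope (g := g) n])
      (by linarith)).trans (by positivity)

theorem le_rightMajorant (hg : Monotone g) {u : ℝ} (hu : 0 ≤ u) : g u ≤ rightMajorant g u := by
  set n := ⌊u⌋₊
  have hn : (n : ℝ) ≤ u := Nat.floor_le hu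
  have hn' : u < n + 1 := Nat.lt_floor_add_one _
  calc g u ≤ rightSlope g n :=
        (hg hn'.le).trans ((le_max_left _ _).trans (le_add_of_nonneg_right zero_le_one))
    _ ≤ rightSlope g n * (u + 1 - n) :=
        le_mul_of_one_le_right (by linarith [one_le_rightSlope (g := g) n]) (by linarith)
    _ = rightSlope g n * (1 - n) + rightSlope g n * u := (rightSlope_line_eq n u).symm
    _ ≤ rightMajorant g u := le_affineSup (bddAbove_rightMajorant_lines hg) n u

theorem rightMajorant_le {u : ℝ} (hu : u ≤ -1) : rightMajorant g u ≤ u + 1 := by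
  refine ciSup_le fun n => ?_
  rw [rightSlope_line_eq]
  have := one_le_rightSlope (g := g) n
  nlinarith [n.cast_nonneg (α := ℝ)]

theorem tendsto_rightMajorant_atBot :
    Tendsto (rightMajorant g) atBot atBot :=
  tendsto_atBot_mono' _ ((eventually_le_atBot (-1)).mono fun _ => rightMajorant_le)
    (tendsto_atBot_add_const_right _ 1 tendsto_id)

theorem exists_convexOn_monotone_majorant (hg : Monotone g) (hbot : Tendsto g atBot atBot) :
    ∃ τ : ℝ → ℝ, ConvexOn ℝ univ τ ∧ Monotone τ ∧ g ≤ τ ∧ Tendsto τ atBot atBot := by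
  refine ⟨leftMajorant g ⊔ rightMajorant g,
    (convexOn_affineSup (bddAbove_leftMajorant_lines hg)).sup
      (convexOn_affineSup (bddAbove_rightMajorant_lines hg)),
    (monotone_affineSup (fun _ => by positivity) (bddAbove_leftMajorant_lines hg)).sup
      (monotone_affineSup (fun n => zero_le_one.trans (one_le_rightSlope n))
        (bddAbove_rightMajorant_lines hg)),
    fun u => ?_, tendsto_sup_atBot _ (tendsto_leftMajorant_atBot hg hbot)
      tendsto_rightMajorant_atBot⟩
  rcases le_total u 0 with hu | hu
  · exact (le_leftMajorant hg hu).trans le_sup_left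
  · exact (le_rightMajorant hg hu).trans le_sup_right

end ConvexMajorant

theorem exists_strictMono_le_add {g : ℝ → ℝ} (hg : Monotone g) (hbot : Tendsto g atBot atBot) :
    ∃ T : ℝ → ℝ, Continuous T ∧ StrictMono T ∧ Tendsto T atBot atBot ∧
      Tendsto T atTop atTop ∧ ∀ a b, g (a + b) ≤ T a + T b := by
  have hdouble : Tendsto (fun u : ℝ => 2 * u) atBot atBot :=
    tendsto_id.const_mul_atBot two_pos
  obtain ⟨τ, hconv, hmono, hle, hτbot⟩ := exists_convexOn_monotone_majorant
    (g := fun u => g (2 * u) / 2) (fun u v huv => by dsimp only; gcongr; exact hg (by linarith))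
    ((hbot.comp hdouble).atBot_div_const two_pos)
  refine ⟨τ + exp, ?_, hmono.add_strictMono exp_strictMono, hτbot.atBot_add tendsto_exp_atBot,
    tendsto_atTop_add_left_of_le' _ (τ 0) ?_ tendsto_exp_atTop, fun a b => ?_⟩
  · exact (continuousOn_univ.1 (hconv.continuousOn isOpen_univ)).add continuous_exp
  · filter_upwards [eventually_ge_atTop 0] with u hu using hmono hu
  · have hmid := hconv.2 (mem_univ a) (mem_univ b) (by norm_num : (0 : ℝ) ≤ 1 / 2)
      (by norm_num : (0 : ℝ) ≤ 1 / 2) (by norm_num)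
    have hab := hle ((a + b) / 2)
    simp only [smul_eq_mul] at hmid hab
    simp only [Pi.add_apply]
    rw [show 1 / 2 * a + 1 / 2 * b = (a + b) / 2 by ring] at hmid
    rw [show 2 * ((a + b) / 2) = a + b by ring] at hab
    linarith [exp_pos a, exp_pos b]

theorem ClassK.pos {f : ℝ → ℝ} (hf : ClassK f) {r : ℝ} (hr : 0 < r) : 0 < f r := by
  simpa [hf.2.2] using hf.2.1 self_mem_Ici hr.le hr

theorem ClassK.monotone_log_comp_exp {f : ℝ → ℝ} (hf : ClassK f) :
    Monotone fun u => log (f (exp u)) :=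
  fun _ _ huv => log_le_log (hf.pos (exp_pos _))
    (hf.2.1.monotoneOn (exp_pos _).le (exp_pos _).le (exp_le_exp.2 huv))

theorem ClassK.tendsto_log_comp_exp_atBot {f : ℝ → ℝ} (hf : ClassK f) :
    Tendsto (fun u => log (f (exp u))) atBot atBot := by
  have hf0 : Tendsto f (𝓝[>] 0) (𝓝[>] 0) := by
    refine tendsto_nhdsWithin_iff.2 ⟨?_, eventually_mem_nhdsWithin.mono fun _ => hf.pos⟩
    simpa [ContinuousWithinAt, hf.2.2] using
      (hf.1 0 self_mem_Ici).mono_left (nhdsWithin_mono 0 Ioi_subset_Ici_self)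
  exact tendsto_log_nhdsGT_zero.comp (hf0.comp tendsto_exp_atBot_nhdsGT)

noncomputable def expLogConj (T : ℝ → ℝ) (r : ℝ) : ℝ := if 0 < r then exp (T (log r)) else 0

section ExpLogConj

variable {T : ℝ → ℝ}

theorem expLogConj_of_pos {r : ℝ} (hr : 0 < r) : expLogConj T r = exp (T (log r)) := if_pos hr

@[simp]
theorem expLogConj_zero : expLogConj T 0 = 0 := if_neg (lt_irrefl 0)

theorem continuousOn_expLogConj (hc : Continuous T) (hbot : Tendsto T atBot atBot) :
    ContinuousOn (expLogConj T) (Ici 0) := by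
  have hpos : EqOn (expLogConj T) (fun r => exp (T (log r))) (Ioi 0) :=
    fun _ hr => expLogConj_of_pos hr
  intro x hx
  rcases (mem_Ici.1 hx).eq_or_lt with rfl | hx
  · rw [← Ioi_insert, continuousWithinAt_insert_self, ContinuousWithinAt, expLogConj_zero]
    exact (tendsto_exp_atBot.comp (hbot.comp tendsto_log_nhdsGT_zero)).congr'
      (eventuallyEq_nhdsWithin_of_eqOn hpos.symm)
  · have : ContinuousAt (fun r => exp (T (log r))) x :=
      continuous_exp.continuousAt.comp (hc.continuousAt.comp (continuousAt_log hx.ne'))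
    exact (this.congr (hpos.eventuallyEq_of_mem (Ioi_mem_nhds hx)).symm).continuousWithinAt

theorem strictMonoOn_expLogConj (hm : StrictMono T) : StrictMonoOn (expLogConj T) (Ici 0) := by
  intro x hx y _ hxy
  have hy : 0 < y := (mem_Ici.1 hx).trans_lt hxy
  rw [expLogConj_of_pos hy]
  rcases (mem_Ici.1 hx).eq_or_lt with rfl | hx
  · simpa using exp_pos _
  · rw [expLogConj_of_pos hx]
    exact exp_lt_exp.2 (hm (log_lt_log hx hxy))

theorem tendsto_expLogConj_atTop (htop : Tendsto T atTop atTop) :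
    Tendsto (expLogConj T) atTop atTop :=
  (tendsto_exp_atTop.comp (htop.comp tendsto_log_atTop)).congr'
    ((eventually_gt_atTop 0).mono fun _ hr => (expLogConj_of_pos hr).symm)

theorem classKInf_expLogConj (hc : Continuous T) (hm : StrictMono T)
    (hbot : Tendsto T atBot atBot) (htop : Tendsto T atTop atTop) : ClassKInf (expLogConj T) :=
  ⟨⟨continuousOn_expLogConj hc hbot, strictMonoOn_expLogConj hm, expLogConj_zero⟩,
    tendsto_expLogConj_atTop htop⟩

end ExpLogConj

/-- For every class-K∞ function γ there exists a class-K∞ function σ such that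
γ(r·s) ≤ σ(r)·σ(s) for all r, s ≥ 0. -/
theorem stmt0 (γ : ℝ → ℝ) (hγ : ClassKInf γ) :
    ∃ σ : ℝ → ℝ, ClassKInf σ ∧ ∀ r s : ℝ, 0 ≤ r → 0 ≤ s → γ (r * s) ≤ σ r * σ s := by
  obtain ⟨T, hc, hm, hbot, htop, hT⟩ :=
    exists_strictMono_le_add hγ.1.monotone_log_comp_exp hγ.1.tendsto_log_comp_exp_atBot
  refine ⟨expLogConj T, classKInf_expLogConj hc hm hbot htop, fun r s hr hs => ?_⟩
  rcases hr.eq_or_lt with rfl | hr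
  · simp [hγ.1.2.2]
  rcases hs.eq_or_lt with rfl | hs
  · simp [hγ.1.2.2]
  calc γ (r * s) = exp (log (γ (exp (log r + log s)))) := by
        rw [exp_add, exp_log hr, exp_log hs, exp_log (hγ.1.pos (mul_pos hr hs))]
    _ ≤ exp (T (log r) + T (log s)) := exp_le_exp.2 (hT _ _)
    _ = expLogConj T r * expLogConj T s := by
        rw [exp_add, expLogConj_of_pos hr, expLogConj_of_pos hs]
end

section
/- For every class-KL function β there exist class-K∞ functions θ₁ and θ₂ such that β(r, t) ≤ θ₁(θ₂(r)·e^{-t}) for all r, t ≥ 0. -/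
open Filter Set Real

lemma ClassK.nonneg {f : ℝ → ℝ} (hf : ClassK f) {x : ℝ} (hx : 0 ≤ x) : 0 ≤ f x :=
  hf.2.2 ▸ hf.2.1.monotoneOn self_mem_Ici hx hx

lemma ClassKInf.exists_leftInverse {α : ℝ → ℝ} (hα : ClassKInf α) :
    ∃ θ, ClassKInf θ ∧ ∀ v, 0 ≤ v → θ (α v) = v := by
  obtain ⟨⟨hcont, hmono, hzero⟩, htop⟩ := hα
  -- extend `α` by the identity on `(-∞, 0]` to get an order isomorphism of `ℝ`
  set f : ℝ → ℝ := fun v => α (max v 0) + min v 0 with hf_def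
  have hf : ∀ v, 0 ≤ v → f v = α v := fun v hv => by
    simp [hf_def, max_eq_left hv, min_eq_right hv]
  have hstrict : StrictMono f := by
    intro x y hxy
    rcases le_or_gt y 0 with hy | hy
    · simp only [hf_def, max_eq_right hy, max_eq_right (hxy.le.trans hy),
        min_eq_left hy, min_eq_left (hxy.le.trans hy)]
      linarith
    · exact add_lt_add_of_lt_of_le
        (hmono (le_max_right x 0) (le_max_right y 0) ((max_lt hxy hy).trans_le (le_max_left y 0)))
        (min_le_min_right 0 hxy.le)
  have hsurj : Function.Surjective f := by
    refine Continuous.surjective ?_ ?_ ?_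
    · exact (hcont.comp_continuous (continuous_id.max continuous_const)
        fun v => le_max_right v 0).add (continuous_id.min continuous_const)
    · exact htop.congr' (eventually_ge_atTop 0 |>.mono fun v hv => (hf v hv).symm)
    · refine tendsto_id.congr' (eventually_le_atBot 0 |>.mono fun v hv => ?_)
      simp [hf_def, max_eq_right hv, min_eq_left hv, hzero]
  set e := StrictMono.orderIsoOfSurjective f hstrict hsurj
  have he : ∀ v, 0 ≤ v → e.symm (α v) = v := fun v hv => by
    rw [← hf v hv]; exact e.symm_apply_apply v
  exact ⟨e.symm, ⟨⟨e.symm.continuous.continuousOn, e.symm.strictMono.strictMonoOn _,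
    by simpa [hzero] using he 0 le_rfl⟩, e.symm.tendsto_atTop⟩, he⟩

section Primitive

variable {φ : ℝ → ℝ} (hφ : Monotone φ)
include hφ

lemma Monotone.sub_mul_le_integral {a b : ℝ} (hab : a ≤ b) :
    (b - a) * φ a ≤ ∫ s in a..b, φ s := by
  simpa using intervalIntegral.integral_mono_on (μ := MeasureTheory.volume) hab
    intervalIntegrable_const hφ.intervalIntegrable fun s hs => hφ hs.1

lemma Monotone.integral_le_sub_mul {a b : ℝ} (hab : a ≤ b) :
    ∫ s in a..b, φ s ≤ (b - a) * φ b := by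
  simpa using intervalIntegral.integral_mono_on (μ := MeasureTheory.volume) hab
    hφ.intervalIntegrable intervalIntegrable_const fun s hs => hφ hs.2

lemma Monotone.integral_sub_integral (a b : ℝ) :
    (∫ s in 0..b, φ s) - ∫ s in 0..a, φ s = ∫ s in a..b, φ s :=
  intervalIntegral.integral_interval_sub_left hφ.intervalIntegrable hφ.intervalIntegrable

lemma Monotone.classKInf_primitive (hpos : ∀ v, 0 < v → 0 < φ v) :
    ClassKInf fun v => ∫ s in 0..v, φ s := by
  have hcont := intervalIntegral.continuous_primitive
    (μ := MeasureTheory.volume) (fun _ _ => hφ.intervalIntegrable) 0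
  refine ⟨⟨hcont.continuousOn, fun x hx y _ hxy => ?_, intervalIntegral.integral_same⟩, ?_⟩
  · have := intervalIntegral.intervalIntegral_pos_of_pos_on hφ.intervalIntegrable
      (fun s hs => hpos s (lt_of_le_of_lt hx hs.1)) hxy
    linarith [hφ.integral_sub_integral x y]
  · refine tendsto_atTop_mono' atTop (f₁ := fun v => (∫ s in 0..1, φ s) + (v - 1) * φ 1)
      (eventually_ge_atTop 1 |>.mono fun v hv => ?_) ?_
    · linarith [hφ.sub_mul_le_integral hv, hφ.integral_sub_integral 1 v]
    · exact tendsto_atTop_add_const_left _ _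
        ((tendsto_atTop_add_const_right _ _ tendsto_id).atTop_mul_const (hpos 1 one_pos))

end Primitive

lemma exists_classKInf_ge (M : ℕ → ℝ) :
    ∃ θ, ClassKInf θ ∧ (∀ r, 0 ≤ r → r ≤ θ r) ∧ ∀ r, 1 ≤ r → M ⌈r⌉₊ ≤ θ r := by
  set ψ : ℝ → ℝ := fun s => 1 + ∑ k ∈ Finset.range (⌊s⌋₊ + 3), |M k| with hψ_def
  have hψ_one : ∀ s, 1 ≤ ψ s := fun s => le_add_of_nonneg_right (by positivity)
  have hψ : Monotone ψ := fun s s' h => by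
    have : ⌊s⌋₊ ≤ ⌊s'⌋₊ := Nat.floor_le_floor h
    simp only [hψ_def, add_le_add_iff_left]
    exact Finset.sum_le_sum_of_subset_of_nonneg (Finset.range_subset_range.2 (by omega))
      fun k _ _ => abs_nonneg (M k)
  refine ⟨fun r => ∫ s in 0..r, ψ s, hψ.classKInf_primitive fun v _ => one_pos.trans_le (hψ_one v),
    fun r hr => ?_, fun r hr => ?_⟩
  · nlinarith [hψ.sub_mul_le_integral hr, hψ_one 0]
  · -- `ψ` exceeds `M ⌈r⌉₊` on `[r - 1, r]`
    have hM : M ⌈r⌉₊ ≤ ψ (r - 1) := by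
      have : ⌈r⌉₊ ∈ Finset.range (⌊r - 1⌋₊ + 3) := by
        have := Nat.ceil_lt_add_one (zero_le_one.trans hr)
        have := Nat.lt_floor_add_one (r - 1)
        rw [Finset.mem_range]
        exact_mod_cast (by linarith : (⌈r⌉₊ : ℝ) < ⌊r - 1⌋₊ + 3)
      linarith [(le_abs_self _).trans (Finset.single_le_sum (fun k _ => abs_nonneg (M k)) this)]
    have hhead := hψ.sub_mul_le_integral (sub_nonneg.2 hr)
    have htail := hψ.sub_mul_le_integral (sub_le_self r zero_le_one)
    nlinarith [hψ.integral_sub_integral (r - 1) r, hψ_one 0]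

noncomputable def envelope (w : ℕ → ℝ → ℝ) (v : ℝ) : ℝ := if 0 < v then ⨅ n, w n v else 0

section Envelope

variable {w : ℕ → ℝ → ℝ} (hw : ∀ n v, 0 < w n v)
include hw

lemma bddBelow_range_apply (v : ℝ) : BddBelow (range fun n => w n v) :=
  ⟨0, by rintro _ ⟨n, rfl⟩; exact (hw n v).le⟩

lemma envelope_le {v : ℝ} (hv : 0 < v) (n : ℕ) : envelope w v ≤ w n v := by
  rw [envelope, if_pos hv]
  exact ciInf_le (bddBelow_range_apply hw v) n

lemma envelope_nonneg (v : ℝ) : 0 ≤ envelope w v := by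
  unfold envelope
  split_ifs
  exacts [le_ciInf fun n => (hw n v).le, le_rfl]

lemma envelope_monotone (hmono : ∀ n, MonotoneOn (w n) (Ioi 0)) : Monotone (envelope w) := by
  intro v v' hvv'
  by_cases hv : 0 < v
  · have hv' := hv.trans_le hvv'
    rw [envelope, envelope, if_pos hv, if_pos hv']
    exact ciInf_mono (bddBelow_range_apply hw v) fun n => hmono n hv hv' hvv'
  · rw [envelope, if_neg hv]
    exact envelope_nonneg hw v'

lemma envelope_pos (hev : ∀ v, 0 < v → ∀ᶠ n in atTop, 1 ≤ w n v) {v : ℝ} (hv : 0 < v) :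
    0 < envelope w v := by
  obtain ⟨N, hN⟩ := eventually_atTop.1 (hev v hv)
  -- only the finitely many weights with index below `N` can be smaller than `1`
  set δ := min 1 ((Finset.range (N + 1)).inf' Finset.nonempty_range_add_one fun n => w n v)
  have hδ : 0 < δ := lt_min one_pos ((Finset.lt_inf'_iff _).2 fun n _ => hw n v)
  have hδw : ∀ n, δ ≤ w n v := fun n => by
    rcases le_or_gt N n with h | h
    · exact (min_le_left _ _).trans (hN n h)
    · exact (min_le_right _ _).trans (Finset.inf'_le _ (Finset.mem_range.2 (by omega)))
  rw [envelope, if_pos hv]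
  exact hδ.trans_le (le_ciInf hδw)

end Envelope

lemma exists_nat_one_div_lt_le {r : ℝ} (hr0 : 0 < r) (hr1 : r ≤ 1) :
    ∃ m : ℕ, 1 / ((m : ℝ) + 2) < r ∧ r ≤ 1 / ((m : ℝ) + 1) := by
  obtain ⟨m, hm⟩ := Nat.exists_eq_add_of_le' ((Nat.one_le_floor_iff _).2 (one_le_one_div hr0 hr1))
  have hle := Nat.floor_le (one_div_pos.2 hr0).le
  have hlt := Nat.lt_floor_add_one (1 / r)
  rw [hm] at hle hlt
  push_cast at hle hlt
  rw [le_div_iff₀ hr0] at hle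
  rw [div_lt_iff₀ hr0] at hlt
  exact ⟨m, by rw [div_lt_iff₀ (by positivity)]; linarith,
    by rw [le_div_iff₀ (by positivity)]; linarith⟩

/-- The last time at which `β r ·` still reaches the level `v` (`0` if it never does). -/
noncomputable def exitTime (β : ℝ → ℝ → ℝ) (r v : ℝ) : ℝ := sSup {t | 0 ≤ t ∧ v ≤ β r t}

lemma exitTime_nonneg (β : ℝ → ℝ → ℝ) (r v : ℝ) : 0 ≤ exitTime β r v :=
  Real.sSup_nonneg fun _ ht => ht.1

noncomputable def cutoffWeight (β : ℝ → ℝ → ℝ) (R ε c v : ℝ) : ℝ :=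
  if v ≤ ε then c * exp (-exitTime β R v) else 1

lemma cutoffWeight_pos (β : ℝ → ℝ → ℝ) (R ε : ℝ) {c : ℝ} (hc : 0 < c) (v : ℝ) :
    0 < cutoffWeight β R ε c v := by
  unfold cutoffWeight
  split_ifs <;> positivity

lemma cutoffWeight_of_lt (β : ℝ → ℝ → ℝ) (R c : ℝ) {ε v : ℝ} (h : ε < v) :
    cutoffWeight β R ε c v = 1 :=
  if_neg h.not_ge

/-- The first weight makes `t ↦ eᵗ α(β(n, t))` bounded; the second makes it at most `1/(n+2)`
on radii `r ≤ 1/(n+1)`, the factor `β 1 0 + 1` bounding the levels that occur there. -/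
noncomputable def klWeight (β : ℝ → ℝ → ℝ) (n : ℕ) (v : ℝ) : ℝ :=
  min (cutoffWeight β n (1 / (n + 1)) (exp (exitTime β n (1 / (n + 1)))) v)
    (cutoffWeight β (1 / (n + 1)) (β (1 / (n + 1)) 0) (1 / ((n + 2) * (β 1 0 + 1))) v)

noncomputable def klGauge (β : ℝ → ℝ → ℝ) (v : ℝ) : ℝ := ∫ s in 0..v, envelope (klWeight β) s

namespace ClassKL

variable {β : ℝ → ℝ → ℝ} (hβ : ClassKL β)
include hβ

lemma nonneg {r t : ℝ} (hr : 0 ≤ r) (ht : 0 ≤ t) : 0 ≤ β r t := (hβ.1 t ht).nonneg hr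

lemma zero_left {t : ℝ} (ht : 0 ≤ t) : β 0 t = 0 := (hβ.1 t ht).2.2

lemma mono_left {r r' t : ℝ} (hr : 0 ≤ r) (hrr' : r ≤ r') (ht : 0 ≤ t) : β r t ≤ β r' t :=
  (hβ.1 t ht).2.1.monotoneOn hr (hr.trans hrr') hrr'

lemma anti_right {r t t' : ℝ} (hr : 0 ≤ r) (ht : 0 ≤ t) (htt' : t ≤ t') : β r t' ≤ β r t :=
  (hβ.2 r hr).1 ht (ht.trans htt') htt'

lemma tendsto_one_div_add_one_zero :
    Tendsto (fun n : ℕ => β (1 / (n + 1)) 0) atTop (nhds 0) := by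
  have hc := ((hβ.1 0 le_rfl).1 0 self_mem_Ici).tendsto
  rw [hβ.zero_left le_rfl] at hc
  exact hc.comp (tendsto_nhdsWithin_iff.2 ⟨tendsto_one_div_add_atTop_nhds_zero_nat,
    Eventually.of_forall fun n => mem_Ici.2 (by positivity)⟩)

lemma bddAbove_exitTime_set {r v : ℝ} (hr : 0 ≤ r) (hv : 0 < v) :
    BddAbove {t | 0 ≤ t ∧ v ≤ β r t} := by
  obtain ⟨T, hT⟩ := ((hβ.2 r hr).2.eventually (gt_mem_nhds hv)).exists_forall_of_atTop
  exact ⟨T, fun t ht => le_of_not_gt fun hTt => (hT t hTt.le).not_ge ht.2⟩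

lemma le_exitTime {r v t : ℝ} (hr : 0 ≤ r) (hv : 0 < v) (ht : 0 ≤ t) (hvt : v ≤ β r t) :
    t ≤ exitTime β r v :=
  le_csSup (hβ.bddAbove_exitTime_set hr hv) ⟨ht, hvt⟩

lemma exitTime_anti {r v v' : ℝ} (hr : 0 ≤ r) (hv : 0 < v) (hvv' : v ≤ v') :
    exitTime β r v' ≤ exitTime β r v := by
  rcases eq_empty_or_nonempty {t | 0 ≤ t ∧ v' ≤ β r t} with h | h
  · rw [exitTime, h, Real.sSup_empty]
    exact exitTime_nonneg β r v
  · exact csSup_le_csSup (hβ.bddAbove_exitTime_set hr hv) h fun t ht => ⟨ht.1, hvv'.trans ht.2⟩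

lemma cutoffWeight_monotoneOn {R ε c : ℝ} (hR : 0 ≤ R) (hc : 0 ≤ c)
    (hcε : c * exp (-exitTime β R ε) ≤ 1) : MonotoneOn (cutoffWeight β R ε c) (Ioi 0) := by
  intro v hv v' _ hvv'
  rcases le_or_gt v' ε with hv'ε | hεv'
  · rw [cutoffWeight, cutoffWeight, if_pos (hvv'.trans hv'ε), if_pos hv'ε]
    gcongr
    exact hβ.exitTime_anti hR hv hvv'
  · rw [cutoffWeight_of_lt β R c hεv', cutoffWeight]
    split_ifs with hvε
    · calc c * exp (-exitTime β R v) ≤ c * exp (-exitTime β R ε) := by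
            gcongr
            exact hβ.exitTime_anti hR hv hvε
        _ ≤ 1 := hcε
    · exact le_rfl

lemma cutoffWeight_le {R ε c v t : ℝ} (hR : 0 ≤ R) (hc : 0 ≤ c) (hv : 0 < v) (hvε : v ≤ ε)
    (ht : 0 ≤ t) (hvt : v ≤ β R t) : cutoffWeight β R ε c v ≤ c * exp (-t) := by
  rw [cutoffWeight, if_pos hvε]
  gcongr
  exact hβ.le_exitTime hR hv ht hvt

lemma klWeight_pos (n : ℕ) (v : ℝ) : 0 < klWeight β n v := by
  have := hβ.nonneg zero_le_one le_rfl
  exact lt_min (cutoffWeight_pos _ _ _ (exp_pos _) v) (cutoffWeight_pos _ _ _ (by positivity) v)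

lemma klWeight_monotoneOn (n : ℕ) : MonotoneOn (klWeight β n) (Ioi 0) := by
  have := hβ.nonneg zero_le_one le_rfl
  refine (hβ.cutoffWeight_monotoneOn n.cast_nonneg (exp_pos _).le
    (by rw [← exp_add, add_neg_cancel, exp_zero])).min
    (hβ.cutoffWeight_monotoneOn (by positivity) (by positivity) ?_)
  refine mul_le_one₀ ?_ (exp_pos _).le (exp_le_one_iff.2 (neg_nonpos.2 (exitTime_nonneg _ _ _)))
  rw [div_le_one (by positivity)]
  nlinarith [n.cast_nonneg (α := ℝ)]

lemma eventually_one_le_klWeight {v : ℝ} (hv : 0 < v) : ∀ᶠ n in atTop, 1 ≤ klWeight β n v := by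
  filter_upwards [tendsto_one_div_add_atTop_nhds_zero_nat.eventually (gt_mem_nhds hv),
    hβ.tendsto_one_div_add_one_zero.eventually (gt_mem_nhds hv)] with n h₁ h₂
  rw [klWeight, cutoffWeight_of_lt _ _ _ h₁, cutoffWeight_of_lt _ _ _ h₂, min_self]

lemma monotone_envelope_klWeight : Monotone (envelope (klWeight β)) :=
  envelope_monotone hβ.klWeight_pos hβ.klWeight_monotoneOn

lemma classKInf_klGauge : ClassKInf (klGauge β) :=
  hβ.monotone_envelope_klWeight.classKInf_primitive fun _ =>
    envelope_pos hβ.klWeight_pos fun _ => hβ.eventually_one_le_klWeight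

lemma klGauge_le_mul_klWeight (n : ℕ) {v : ℝ} (hv : 0 < v) :
    klGauge β v ≤ v * klWeight β n v := by
  refine (hβ.monotone_envelope_klWeight.integral_le_sub_mul hv.le).trans ?_
  rw [sub_zero]
  gcongr
  exact envelope_le hβ.klWeight_pos hv n

lemma klGauge_le_of_le_nat (n : ℕ) {r t : ℝ} (hr : 0 ≤ r) (hrn : r ≤ n) (ht : 0 ≤ t) :
    klGauge β (β r t) ≤
      max 1 (klGauge β (β n 0)) * exp (exitTime β n (1 / (n + 1))) * exp (-t) := by
  have hα := hβ.classKInf_klGauge.1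
  have hn : (0 : ℝ) ≤ n := n.cast_nonneg
  have hv0 : 0 ≤ β n t := hβ.nonneg hn ht
  refine (hα.2.1.monotoneOn (hβ.nonneg hr ht) hv0 (hβ.mono_left hr hrn ht)).trans ?_
  rcases hv0.eq_or_lt with hv | hv
  · rw [← hv, hα.2.2]
    positivity
  rcases le_or_gt (β n t) (1 / (n + 1)) with hvε | hεv
  · calc klGauge β (β n t) ≤ β n t * klWeight β n (β n t) := hβ.klGauge_le_mul_klWeight n hv
      _ ≤ 1 * (exp (exitTime β n (1 / (n + 1))) * exp (-t)) := by
          have := hβ.klWeight_pos n (β n t)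
          gcongr
          · exact hvε.trans (div_le_one_of_le₀ (by linarith) (by positivity))
          · exact (min_le_left _ _).trans (hβ.cutoffWeight_le hn (exp_pos _).le hv hvε ht le_rfl)
      _ ≤ _ := by
          rw [one_mul, mul_assoc]
          exact le_mul_of_one_le_left (by positivity) (le_max_left _ _)
  · have htT : t ≤ exitTime β n (1 / (n + 1)) := hβ.le_exitTime hn (by positivity) ht hεv.le
    calc klGauge β (β n t) ≤ klGauge β (β n 0) :=
          hα.2.1.monotoneOn hv0 (hβ.nonneg hn le_rfl) (hβ.anti_right hn le_rfl ht)
      _ ≤ max 1 (klGauge β (β n 0)) * exp (exitTime β n (1 / (n + 1)) - t) :=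
          (le_max_right _ _).trans
            (le_mul_of_one_le_right (by positivity) (one_le_exp (sub_nonneg.2 htT)))
      _ = _ := by rw [sub_eq_add_neg, exp_add, mul_assoc]

lemma klGauge_le_of_le_one {r t : ℝ} (hr : 0 ≤ r) (hr1 : r ≤ 1) (ht : 0 ≤ t) :
    klGauge β (β r t) ≤ r * exp (-t) := by
  have hα := hβ.classKInf_klGauge.1
  rcases hr.eq_or_lt with rfl | hr0
  · rw [hβ.zero_left ht, hα.2.2, zero_mul]
  obtain ⟨m, hmr, hrm⟩ := exists_nat_one_div_lt_le hr0 hr1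
  have hR : (0 : ℝ) ≤ 1 / (m + 1) := by positivity
  have hv0 : 0 ≤ β (1 / (m + 1)) t := hβ.nonneg hR ht
  refine (hα.2.1.monotoneOn (hβ.nonneg hr ht) hv0 (hβ.mono_left hr hrm ht)).trans ?_
  rcases hv0.eq_or_lt with hv | hv
  · rw [← hv, hα.2.2]
    positivity
  have hvw : β (1 / (m + 1)) t ≤ β (1 / (m + 1)) 0 := hβ.anti_right hR le_rfl ht
  have hvV : β (1 / (m + 1)) t ≤ β 1 0 + 1 := by
    have := hβ.mono_left hR (div_le_one_of_le₀ (by linarith) (by positivity)) le_rfl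
    linarith
  have := hβ.nonneg zero_le_one le_rfl
  calc klGauge β (β (1 / (m + 1)) t)
      ≤ β (1 / (m + 1)) t * klWeight β m (β (1 / (m + 1)) t) := hβ.klGauge_le_mul_klWeight m hv
    _ ≤ (β 1 0 + 1) * (1 / ((m + 2) * (β 1 0 + 1)) * exp (-t)) := by
        have := hβ.klWeight_pos m (β (1 / (m + 1)) t)
        gcongr
        exact (min_le_right _ _).trans (hβ.cutoffWeight_le hR (by positivity) hv hvw ht le_rfl)
    _ = 1 / (m + 2) * exp (-t) := by field_simp
    _ ≤ r * exp (-t) := by gcongr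

theorem exists_classKInf_decay :
    ∃ α θ : ℝ → ℝ, ClassKInf α ∧ ClassKInf θ ∧
      ∀ r t, 0 ≤ r → 0 ≤ t → α (β r t) ≤ θ r * exp (-t) := by
  obtain ⟨θ, hθ, hθ_ge_id, hθ_ge_M⟩ := exists_classKInf_ge fun n : ℕ =>
    max 1 (klGauge β (β n 0)) * exp (exitTime β n (1 / (n + 1)))
  refine ⟨klGauge β, θ, hβ.classKInf_klGauge, hθ, fun r t hr ht => ?_⟩
  rcases le_or_gt r 1 with hr1 | hr1
  · exact (hβ.klGauge_le_of_le_one hr hr1 ht).trans (by gcongr; exact hθ_ge_id r hr)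
  · exact (hβ.klGauge_le_of_le_nat ⌈r⌉₊ hr (Nat.le_ceil r) ht).trans
      (by gcongr; exact hθ_ge_M r hr1.le)

end ClassKL

/-- For every class-KL function β there exist class-K∞ functions θ₁, θ₂ such that
β(r,t) ≤ θ₁(θ₂(r)·e^{-t}) for all r, t ≥ 0. -/
theorem stmt1 (β : ℝ → ℝ → ℝ) (hβ : ClassKL β) :
    ∃ θ₁ θ₂ : ℝ → ℝ, ClassKInf θ₁ ∧ ClassKInf θ₂ ∧
      ∀ r t : ℝ, 0 ≤ r → 0 ≤ t → β r t ≤ θ₁ (θ₂ r * Real.exp (-t)) := by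
  obtain ⟨α, θ₂, hα, hθ₂, hdecay⟩ := hβ.exists_classKInf_decay
  obtain ⟨θ₁, hθ₁, hθ₁α⟩ := hα.exists_leftInverse
  refine ⟨θ₁, θ₂, hθ₁, hθ₂, fun r t hr ht => ?_⟩
  have hβrt := hβ.nonneg hr ht
  have hθ₂r := hθ₂.1.nonneg hr
  calc β r t = θ₁ (α (β r t)) := (hθ₁α _ hβrt).symm
    _ ≤ θ₁ (θ₂ r * exp (-t)) :=
      hθ₁.1.2.1.monotoneOn (hα.1.nonneg hβrt) (mem_Ici.2 (by positivity)) (hdecay r t hr ht)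
end

section
/- Given a countable family {γ_M}_{M ∈ ℕ} of class-K∞ functions, there exists a class-K function σ such that γ_M(r) ≤ σ(M)·σ(r) for all r ≥ 0 and all M ∈ ℕ (M ≥ 1). -/
open Filter Topology

/-- Properties of a "locally finite" sum of functions: each `f n` vanishes on `(-∞, n]`. -/
lemma locfin_sum (f : ℕ → ℝ → ℝ)
    (hc : ∀ n, Continuous (f n))
    (h0 : ∀ n r, 0 ≤ f n r)
    (hm : ∀ n, Monotone (f n))
    (hvan : ∀ (n : ℕ) (r : ℝ), r ≤ n → f n r = 0) :
    ContinuousOn (fun r => ∑' n, f n r) (Set.Ici 0) ∧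
    Monotone (fun r => ∑' n, f n r) ∧
    (∑' n, f n 0) = 0 ∧
    ∀ (n : ℕ) (r : ℝ), f n r ≤ ∑' m, f m r := by
  have key : ∀ (N : ℕ) (r : ℝ), r ≤ N → ∑' n, f n r = ∑ n ∈ Finset.range N, f n r := by
    intro N r hr
    refine tsum_eq_sum fun n hn => hvan n r (hr.trans ?_)
    have hNn : N ≤ n := le_of_not_gt fun h => hn (Finset.mem_range.mpr h)
    exact_mod_cast Nat.cast_le.mpr hNn
  have hsum : ∀ r : ℝ, Summable fun n => f n r := by
    intro r
    refine summable_of_ne_finset_zero (s := Finset.range (⌈max r 0⌉₊ + 1)) fun n hn => ?_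
    have hNn : ⌈max r 0⌉₊ + 1 ≤ n := le_of_not_gt fun h => hn (Finset.mem_range.mpr h)
    refine hvan n r ?_
    calc r ≤ max r 0 := le_max_left _ _
      _ ≤ (⌈max r 0⌉₊ : ℝ) := Nat.le_ceil _
      _ ≤ (n : ℝ) := by exact_mod_cast le_trans (Nat.le_succ _) hNn
  refine ⟨?_, ?_, ?_, ?_⟩
  · intro a _
    set N : ℕ := ⌈a⌉₊ + 1 with hN
    have haN : a < (N : ℝ) := by
      have h1 := Nat.le_ceil a
      have h2 : ((⌈a⌉₊ : ℝ) + 1 : ℝ) = (N : ℝ) := by rw [hN]; push_cast; ring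
      linarith
    have hcont : ContinuousAt (fun r => ∑ n ∈ Finset.range N, f n r) a :=
      (continuous_finset_sum _ fun i _ => hc i).continuousAt
    refine ContinuousWithinAt.congr_of_eventuallyEq hcont.continuousWithinAt ?_ (key N a haN.le)
    filter_upwards [mem_nhdsWithin_of_mem_nhds (Iio_mem_nhds haN)] with r hr
    exact key N r hr.le
  · intro r s hrs
    have hNs : s ≤ (⌈max s 0⌉₊ : ℝ) := (le_max_left _ _).trans (Nat.le_ceil _)
    show (∑' n, f n r) ≤ ∑' n, f n s
    rw [key _ r (hrs.trans hNs), key _ s hNs]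
    exact Finset.sum_le_sum fun i _ => hm i hrs
  · have h := key 0 0 (by norm_num)
    simpa using h
  · intro n r
    exact Summable.le_tsum (hsum r) n fun m _ => h0 m r

set_option maxHeartbeats 1000000 in
/-- Given a countable family of class-K∞ functions, there is a class-K function σ with
γ_M(r) ≤ σ(M)·σ(r) for all r ≥ 0 and all integers M ≥ 1. -/
theorem stmt3 (γ : ℕ → ℝ → ℝ) (hγ : ∀ M : ℕ, ClassKInf (γ M)) :
    ∃ σ : ℝ → ℝ, ClassK σ ∧
      ∀ M : ℕ, 1 ≤ M → ∀ r : ℝ, 0 ≤ r → γ M r ≤ σ (M : ℝ) * σ r := by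
  classical
  have hγc : ∀ n, ContinuousOn (γ n) (Set.Ici 0) := fun n => (hγ n).1.1
  have hγm : ∀ n, MonotoneOn (γ n) (Set.Ici 0) := fun n => (hγ n).1.2.1.monotoneOn
  have hγ0 : ∀ n, γ n 0 = 0 := fun n => (hγ n).1.2.2
  have hγpos : ∀ n (r : ℝ), 0 ≤ r → 0 ≤ γ n r := by
    intro n r hr
    have h := hγm n Set.self_mem_Ici (Set.mem_Ici.mpr hr) hr
    rwa [hγ0 n] at h
  -- Clamped versions of γ
  set G : ℕ → ℝ → ℝ := fun n r => γ n (max r 0) with hG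
  have hGc : ∀ n, Continuous (G n) := by
    intro n
    exact (hγc n).comp_continuous (continuous_id.max continuous_const)
      fun x => Set.mem_Ici.mpr (le_max_right _ _)
  have hGm : ∀ n, Monotone (G n) := by
    intro n a b hab
    exact hγm n (Set.mem_Ici.mpr (le_max_right _ _)) (Set.mem_Ici.mpr (le_max_right _ _))
      (max_le_max hab le_rfl)
  have hGeq : ∀ n (r : ℝ), 0 ≤ r → G n r = γ n r := by
    intro n r hr; simp only [hG]; rw [max_eq_left hr]
  have hG0 : ∀ n (r : ℝ), 0 ≤ G n r := fun n r => hγpos n _ (le_max_right _ _)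
  -- The three families of terms
  set p : ℕ → ℝ → ℝ := fun n r => (1/2 : ℝ)^n * min (G n r) 1 with hp
  set q : ℕ → ℝ → ℝ :=
    fun n r => (2 : ℝ)^(n+1) * (1 + γ (n+1) ((n : ℝ) + 1)) * min (max (r - n) 0) 1 with hq
  set w : ℕ → ℝ → ℝ := fun n r => max (G n r - γ n n) 0 with hw
  set φ : ℝ → ℝ := fun r => ∑' n, p n r with hφdef
  set χ : ℝ → ℝ := fun r => ∑' n, q n r with hχdef
  set ψ : ℝ → ℝ := fun r => ∑' n, w n r with hψdef
  -- facts about p / φ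
  have hp0 : ∀ n r, 0 ≤ p n r := by
    intro n r
    exact mul_nonneg (by positivity) (le_min (hG0 n r) one_pos.le)
  have hple : ∀ n r, p n r ≤ (1/2 : ℝ)^n := by
    intro n r
    calc p n r ≤ (1/2 : ℝ)^n * 1 :=
          mul_le_mul_of_nonneg_left (min_le_right _ _) (by positivity)
      _ = (1/2 : ℝ)^n := mul_one _
  have hgeo : Summable fun n : ℕ => (1/2 : ℝ)^n :=
    summable_geometric_of_lt_one (by norm_num) (by norm_num)
  have hpsum : ∀ r, Summable fun n => p n r := by
    intro r
    exact Summable.of_nonneg_of_le (fun n => hp0 n r) (fun n => hple n r) hgeo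
  have hφc : Continuous φ := by
    refine continuous_tsum (fun n => ?_) hgeo (fun n x => ?_)
    · exact continuous_const.mul ((hGc n).min continuous_const)
    · rw [Real.norm_eq_abs, abs_of_nonneg (hp0 n x)]; exact hple n x
  have hφm : Monotone φ := by
    intro r s hrs
    refine Summable.tsum_le_tsum (fun n => ?_) (hpsum r) (hpsum s)
    exact mul_le_mul_of_nonneg_left (min_le_min (hGm n hrs) le_rfl) (by positivity)
  have hφ0 : φ 0 = 0 := by
    have hz : ∀ n : ℕ, p n 0 = 0 := by
      intro n
      have hGz : G n 0 = 0 := by rw [hGeq n 0 le_rfl, hγ0]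
      simp only [hp, hGz, min_eq_left one_pos.le, mul_zero]
    simp only [hφdef, hz, tsum_zero]
  have hφnn : ∀ r, 0 ≤ φ r := fun r => tsum_nonneg fun n => hp0 n r
  have hφge : ∀ n r, p n r ≤ φ r := fun n r => Summable.le_tsum (hpsum r) n fun m _ => hp0 m r
  -- facts about q / χ via locfin_sum
  have hcpos : ∀ n : ℕ, 0 ≤ (2 : ℝ)^(n+1) * (1 + γ (n+1) ((n : ℝ) + 1)) := by
    intro n
    have h1 : (0 : ℝ) ≤ γ (n+1) ((n : ℝ) + 1) := hγpos _ _ (by positivity)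
    positivity
  obtain ⟨hχc, hχm, hχ0, hχge⟩ := locfin_sum q
    (fun n => continuous_const.mul (((continuous_id.sub continuous_const).max
        continuous_const).min continuous_const))
    (fun n r => mul_nonneg (hcpos n) (le_min (le_max_right _ _) one_pos.le))
    (fun n a b hab => by
      refine mul_le_mul_of_nonneg_left ?_ (hcpos n)
      exact min_le_min (max_le_max (by linarith) le_rfl) le_rfl)
    (fun n r hr => by
      simp only [hq]
      rw [max_eq_right (sub_nonpos.mpr hr), min_eq_left one_pos.le, mul_zero])
  have hχnn : ∀ r, 0 ≤ χ r := fun r =>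
    tsum_nonneg fun n => mul_nonneg (hcpos n) (le_min (le_max_right _ _) one_pos.le)
  -- facts about w / ψ via locfin_sum
  obtain ⟨hψc, hψm, hψ0, hψge⟩ := locfin_sum w
    (fun n => ((hGc n).sub continuous_const).max continuous_const)
    (fun n r => le_max_right _ _)
    (fun n a b hab => max_le_max (sub_le_sub_right (hGm n hab) _) le_rfl)
    (fun n r hr => by
      simp only [hw]
      have h1 : G n r ≤ γ n n := by
        refine hγm n (Set.mem_Ici.mpr (le_max_right _ _)) (Set.mem_Ici.mpr (Nat.cast_nonneg n)) ?_
        exact max_le hr (Nat.cast_nonneg n)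
      rw [max_eq_right (sub_nonpos.mpr h1)])
  have hψnn : ∀ r, 0 ≤ ψ r := fun r => tsum_nonneg fun n => le_max_right _ _
  -- define σ
  refine ⟨fun r => r + φ r + χ r + ψ r, ⟨?_, ?_, ?_⟩, ?_⟩
  · exact ((continuous_id.add hφc).continuousOn.add hχc).add hψc
  · intro a _ b _ hab
    have h1 := hφm hab.le
    have h2 : χ a ≤ χ b := hχm hab.le
    have h3 : ψ a ≤ ψ b := hψm hab.le
    show a + φ a + χ a + ψ a < b + φ b + χ b + ψ b
    linarith
  · show (0 : ℝ) + φ 0 + χ 0 + ψ 0 = 0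
    have h2 : χ 0 = 0 := hχ0
    have h3 : ψ 0 = 0 := hψ0
    rw [hφ0, h2, h3]; ring
  · intro M hM r hr
    show γ M r ≤ ((M : ℝ) + φ (M : ℝ) + χ (M : ℝ) + ψ (M : ℝ)) * (r + φ r + χ r + ψ r)
    obtain ⟨k, rfl⟩ := Nat.exists_eq_add_of_le hM
    set M := 1 + k with hMdef
    have hMpos : (1 : ℝ) ≤ (M : ℝ) := by
      have : 1 ≤ M := by omega
      exact_mod_cast this
    set A := γ M r with hA
    set B := γ M (M : ℝ) with hB
    have hA0 : 0 ≤ A := hγpos M r hr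
    have hB0 : 0 ≤ B := hγpos M _ (by positivity)
    set σr := r + φ r + χ r + ψ r with hσr
    set σM := (M : ℝ) + φ (M : ℝ) + χ (M : ℝ) + ψ (M : ℝ) with hσM
    have hσr0 : 0 ≤ σr := by
      have := hφnn r; have := hχnn r; have := hψnn r; linarith
    -- σ r ≥ (1/2)^M * min A 1
    have hσrφ : (1/2 : ℝ)^M * min A 1 ≤ σr := by
      have h1 : p M r ≤ φ r := hφge M r
      have h2 : p M r = (1/2 : ℝ)^M * min A 1 := by
        simp only [hp, hGeq M r hr, hA]
      have := hχnn r; have := hψnn r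
      rw [h2] at h1; linarith
    -- σ r ≥ A - B
    have hσrψ : A - B ≤ σr := by
      have h1 : w M r ≤ ψ r := hψge M r
      have h2 : A - B ≤ w M r := by
        simp only [hw, hGeq M r hr, hA, hB]
        exact le_max_left _ _
      have := hφnn r; have := hχnn r
      linarith
    have hσrr : r ≤ σr := by
      have := hφnn r; have := hχnn r; have := hψnn r; linarith
    -- σ M ≥ 2^M * (1 + B)
    have hσMχ : (2 : ℝ)^M * (1 + B) ≤ σM := by
      have h1 : q k (M : ℝ) ≤ χ (M : ℝ) := hχge k (M : ℝ)
      have h2 : q k (M : ℝ) = (2 : ℝ)^M * (1 + B) := by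
        simp only [hq]
        have hk1 : k + 1 = M := by omega
        have hc1 : ((k : ℝ) + 1) = (M : ℝ) := by
          rw [← hk1]; push_cast; ring
        have hramp : min (max ((M : ℝ) - (k : ℝ)) 0) 1 = 1 := by
          have hd : (M : ℝ) - (k : ℝ) = 1 := by rw [← hc1]; ring
          rw [hd]; norm_num
        rw [hramp, hk1, hc1, mul_one, ← hB]
      have := hφnn (M : ℝ); have := hψnn (M : ℝ)
      have hM0 : (0 : ℝ) ≤ (M : ℝ) := by positivity
      rw [h2] at h1; linarith
    have hσM0 : 0 ≤ σM := by
      have := hφnn (M : ℝ); have := hχnn (M : ℝ); have := hψnn (M : ℝ)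
      linarith
    have hσM1 : 1 ≤ σM := by
      have := hφnn (M : ℝ); have := hχnn (M : ℝ); have := hψnn (M : ℝ)
      linarith
    have hid : (2 : ℝ)^M * (1/2 : ℝ)^M = 1 := by
      rw [← mul_pow]; norm_num
    by_cases hA1 : A ≤ 1
    · have hmin : min A 1 = A := min_eq_left hA1
      rw [hmin] at hσrφ
      have h1 : (2^M * (1 + B)) * ((1/2 : ℝ)^M * A) ≤ σM * σr :=
        mul_le_mul hσMχ hσrφ (by positivity) hσM0
      have h2 : (2^M * (1 + B)) * ((1/2 : ℝ)^M * A) = (1 + B) * A := by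
        rw [show (2:ℝ)^M * (1 + B) * ((1/2:ℝ)^M * A)
            = ((2:ℝ)^M * (1/2:ℝ)^M) * ((1 + B) * A) by ring, hid, one_mul]
      nlinarith [mul_nonneg hB0 hA0]
    · push_neg at hA1
      by_cases hrM : r ≤ (M : ℝ)
      · have hABle : A ≤ B :=
          hγm M (Set.mem_Ici.mpr hr) (Set.mem_Ici.mpr (by positivity)) hrM
        have hmin : min A 1 = 1 := min_eq_right hA1.le
        rw [hmin, mul_one] at hσrφ
        have h1 : (2^M * (1 + B)) * ((1/2 : ℝ)^M) ≤ σM * σr :=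
          mul_le_mul hσMχ hσrφ (by positivity) hσM0
        have h2 : (2^M * (1 + B)) * ((1/2 : ℝ)^M) = 1 + B := by
          rw [show (2:ℝ)^M * (1 + B) * ((1/2:ℝ)^M)
              = ((2:ℝ)^M * (1/2:ℝ)^M) * (1 + B) by ring, hid, one_mul]
        rw [h2] at h1
        linarith
      · push_neg at hrM
        have hσr1 : 1 ≤ σr := by linarith
        have h2M : (1 : ℝ) ≤ 2^M := one_le_pow₀ (by norm_num)
        have hσMB : 1 + B ≤ σM := by nlinarith
        have h1 : (1 + B) * σr ≤ σM * σr := mul_le_mul_of_nonneg_right hσMB hσr0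
        have h3 : B * 1 ≤ B * σr := mul_le_mul_of_nonneg_left hσr1 hB0
        have h4 : (1 + B) * σr = σr + B * σr := by ring
        linarith
end

section
/- Consider the system ẋ₁ = −x₁(1 − sin x₂), ẋ₂ = −x₂ + u. If ‖u‖_∞ ≤ 1/2 then along any trajectory |x₁(t)| ≤ |ξ₁| e^{|ξ₂|} e^{−t/2} for all t ≥ 0. -/
/-- The vector field of the system ẋ₁ = −x₁(1 − sin x₂), ẋ₂ = −x₂ + u. -/
noncomputable def fsys (x : ℝ × ℝ) (u : ℝ) : ℝ × ℝ :=
  (-x.1 * (1 - Real.sin x.2), -x.2 + u)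

/-!
The second equation is linear and stable: with `|u| ≤ 1/2`, the function `eᵗ (x₂ t - 1/2)` is
nonincreasing, so `|x₂ t| ≤ |ξ₂| e⁻ᵗ + 1/2`. Hence the decay rate `1 - sin x₂ ≥ 1 - |x₂|` of the
first equation is at least `b t = 1/2 - |ξ₂| e⁻ᵗ`, whose primitive `t/2 + |ξ₂| e⁻ᵗ` exceeds `t/2`
by at most `|ξ₂|`. The comparison is made by checking that `x₁² e^{2B}`, with `B' = b`, is
nonincreasing.
-/

open Real Set

section Prod

variable {𝕜 E F : Type*} [NontriviallyNormedField 𝕜] [NormedAddCommGroup E] [NormedSpace 𝕜 E]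
  [NormedAddCommGroup F] [NormedSpace 𝕜 F] {x : 𝕜 → E × F} {p : E × F} {t : 𝕜}

theorem HasDerivAt.fst (h : HasDerivAt x p t) : HasDerivAt (fun s => (x s).1) p.1 t :=
  (ContinuousLinearMap.fst 𝕜 E F).hasFDerivAt.comp_hasDerivAt t h

theorem HasDerivAt.snd (h : HasDerivAt x p t) : HasDerivAt (fun s => (x s).2) p.2 t :=
  (ContinuousLinearMap.snd 𝕜 E F).hasFDerivAt.comp_hasDerivAt t h

end Prod

theorem antitoneOn_Ici_of_hasDerivAt_nonpos {f f' : ℝ → ℝ} {a : ℝ}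
    (hf : ∀ t, a ≤ t → HasDerivAt f (f' t) t) (hf' : ∀ t, a ≤ t → f' t ≤ 0) :
    AntitoneOn f (Ici a) := by
  refine antitoneOn_of_hasDerivWithinAt_nonpos (f' := f') (convex_Ici a)
    (fun t ht => (hf t ht).continuousAt.continuousWithinAt) (fun t ht => ?_) (fun t ht => ?_)
  all_goals rw [interior_Ici] at ht
  exacts [(hf t ht.le).hasDerivWithinAt, hf' t ht.le]

section Comparison

variable {y : ℝ → ℝ} {t : ℝ}

theorem le_of_hasDerivAt_neg_add {v : ℝ → ℝ} {c : ℝ}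
    (hy : ∀ s, 0 ≤ s → HasDerivAt y (-y s + v s) s) (hv : ∀ s, 0 ≤ s → v s ≤ c) (ht : 0 ≤ t) :
    y t ≤ (y 0 - c) * exp (-t) + c := by
  have hg : AntitoneOn (fun s => exp s * (y s - c)) (Ici 0) := by
    refine antitoneOn_Ici_of_hasDerivAt_nonpos (f' := fun s => exp s * (v s - c))
      (fun s hs => ?_) (fun s hs => ?_)
    · exact ((hasDerivAt_exp s).mul ((hy s hs).sub_const c)).congr_deriv (by ring)
    · exact mul_nonpos_of_nonneg_of_nonpos (exp_pos s).le (sub_nonpos.2 (hv s hs))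
  have h := hg self_mem_Ici ht ht
  simp only [exp_zero, one_mul] at h
  have h' := mul_le_mul_of_nonneg_left h (exp_pos (-t)).le
  rw [← mul_assoc, ← exp_add, neg_add_cancel, exp_zero, one_mul] at h'
  linarith

theorem abs_le_of_hasDerivAt_neg_add {v : ℝ → ℝ} {c : ℝ}
    (hy : ∀ s, 0 ≤ s → HasDerivAt y (-y s + v s) s) (hv : ∀ s, 0 ≤ s → |v s| ≤ c) (ht : 0 ≤ t) :
    |y t| ≤ |y 0| * exp (-t) + c := by
  have hc : 0 ≤ c := (abs_nonneg _).trans (hv 0 le_rfl)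
  have hupper := le_of_hasDerivAt_neg_add hy (fun s hs => (le_abs_self _).trans (hv s hs)) ht
  have hlower := le_of_hasDerivAt_neg_add (y := fun s => -y s) (v := fun s => -v s)
    (fun s hs => ((hy s hs).neg).congr_deriv (by ring))
    (fun s hs => (neg_le_abs _).trans (hv s hs)) ht
  have hexp := exp_pos (-t)
  rw [abs_le]
  constructor <;> nlinarith [le_abs_self (y 0), neg_abs_le (y 0)]

theorem abs_mul_exp_le_of_hasDerivAt {a B b : ℝ → ℝ}
    (hy : ∀ s, 0 ≤ s → HasDerivAt y (-a s * y s) s) (hB : ∀ s, 0 ≤ s → HasDerivAt B (b s) s)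
    (hba : ∀ s, 0 ≤ s → b s ≤ a s) (ht : 0 ≤ t) :
    |y t| * exp (B t) ≤ |y 0| * exp (B 0) := by
  have hV : AntitoneOn (fun s => y s ^ 2 * exp (2 * B s)) (Ici 0) := by
    refine antitoneOn_Ici_of_hasDerivAt_nonpos
      (f' := fun s => 2 * (y s ^ 2 * exp (2 * B s)) * (b s - a s)) (fun s hs => ?_)
      (fun s hs => ?_)
    · exact (((hy s hs).fun_pow 2).mul ((hB s hs).const_mul 2).exp).congr_deriv (by ring)
    · exact mul_nonpos_of_nonneg_of_nonpos (by positivity) (sub_nonpos.2 (hba s hs))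
  have hsq : (|y t| * exp (B t)) ^ 2 ≤ (|y 0| * exp (B 0)) ^ 2 := by
    simpa only [mul_pow, sq_abs, ← exp_nat_mul, Nat.cast_ofNat] using hV self_mem_Ici ht ht
  exact (pow_le_pow_iff_left₀ (by positivity) (by positivity) two_ne_zero).1 hsq

end Comparison

theorem stmt10_general (x : ℝ → ℝ × ℝ) (u : ℝ → ℝ)
    (hx : ∀ t, 0 ≤ t → HasDerivAt x (fsys (x t) (u t)) t)
    (hub : ∀ s, 0 ≤ s → |u s| ≤ 1 / 2) :
    ∀ t, 0 ≤ t →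
      |(x t).1| ≤ |(x 0).1| * Real.exp |(x 0).2| * Real.exp (-t / 2) := by
  intro t ht
  set ξ₂ := (x 0).2
  have hx₂ : ∀ s, 0 ≤ s → |(x s).2| ≤ |ξ₂| * exp (-s) + 1 / 2 := fun s hs =>
    abs_le_of_hasDerivAt_neg_add (fun r hr => (hx r hr).snd) hub hs
  have hB : ∀ s, HasDerivAt (fun r => r / 2 + |ξ₂| * exp (-r)) (1 / 2 - |ξ₂| * exp (-s)) s :=
    fun s => (((hasDerivAt_id s).div_const 2).add
      ((hasDerivAt_neg s).exp.const_mul |ξ₂|)).congr_deriv (by simp only [one_div, mul_neg, mul_one]; ring)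
  have hrate : ∀ s, 0 ≤ s → 1 / 2 - |ξ₂| * exp (-s) ≤ 1 - sin (x s).2 := fun s hs => by
    linarith [hx₂ s hs, abs_sin_le_abs (x := (x s).2), le_abs_self (sin (x s).2)]
  have hx₁ : ∀ s, 0 ≤ s →
      HasDerivAt (fun r => (x r).1) (-(1 - sin (x s).2) * (x s).1) s := fun s hs =>
    (hx s hs).fst.congr_deriv (by simp only [fsys]; ring)
  have hdecay := abs_mul_exp_le_of_hasDerivAt hx₁ (fun s _ => hB s) hrate ht
  simp only [zero_div, neg_zero, exp_zero, mul_one, zero_add] at hdecay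
  have hgrow : exp (t / 2) ≤ exp (t / 2 + |ξ₂| * exp (-t)) :=
    exp_le_exp.2 (le_add_of_nonneg_right (by positivity))
  rw [neg_div, exp_neg, ← div_eq_mul_inv, le_div_iff₀ (exp_pos _)]
  exact (mul_le_mul_of_nonneg_left hgrow (abs_nonneg _)).trans hdecay

/-- If ‖u‖_∞ ≤ 1/2 then along any trajectory of the system,
|x₁(t)| ≤ |ξ₁| e^{|ξ₂|} e^{−t/2} for all t ≥ 0. -/
theorem stmt10 (x : ℝ → ℝ × ℝ) (u : ℝ → ℝ) (hu : Measurable u)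
    (hx : ∀ t, 0 ≤ t → HasDerivAt x (fsys (x t) (u t)) t)
    (hub : ∀ s, 0 ≤ s → |u s| ≤ 1 / 2) :
    ∀ t, 0 ≤ t →
      |(x t).1| ≤ |(x 0).1| * Real.exp |(x 0).2| * Real.exp (-t / 2) :=
  stmt10_general x u hx hub
end

section
/- Consider the system ẋ₁ = −x₁(1 − sin x₂), ẋ₂ = −x₂ + u. For any input u, along any trajectory |x₁(t)| ≤ |ξ₁| e^{|ξ₂|} for all t ≥ 0. -/
open Set

theorem abs_antitoneOn_of_hasDerivAt_neg_mul {y c : ℝ → ℝ} {a : ℝ}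
    (hy : ∀ t, a ≤ t → HasDerivAt y (-y t * c t) t) (hc : ∀ t, a ≤ t → 0 ≤ c t) :
    AntitoneOn (fun t => |y t|) (Ici a) := by
  have hsq : ∀ t, a ≤ t → HasDerivAt (fun s => y s ^ 2) (2 * y t * (-y t * c t)) t := by
    intro t ht
    simpa using (hy t ht).fun_pow 2
  have hanti : AntitoneOn (fun t => y t ^ 2) (Ici a) := by
    refine antitoneOn_of_hasDerivWithinAt_nonpos (convex_Ici a)
      (fun t ht => (hsq t ht).continuousAt.continuousWithinAt)
      (fun t ht => (hsq t (interior_subset ht)).hasDerivWithinAt) fun t ht => ?_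
    have := hc t (interior_subset ht)
    nlinarith [sq_nonneg (y t)]
  intro s hs t ht hst
  exact sq_le_sq.mp (hanti hs ht hst)

theorem stmt11_general (x : ℝ → ℝ × ℝ) (u : ℝ → ℝ)
    (hx : ∀ t, 0 ≤ t → HasDerivAt x (fsys (x t) (u t)) t) :
    ∀ t, 0 ≤ t → |(x t).1| ≤ |(x 0).1| * Real.exp |(x 0).2| := by
  intro t ht
  have hdecay : |(x t).1| ≤ |(x 0).1| :=
    abs_antitoneOn_of_hasDerivAt_neg_mul (y := fun s => (x s).1)
      (c := fun s => 1 - Real.sin (x s).2) (fun s hs => (hx s hs).fst)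
      (fun s _ => sub_nonneg.mpr (Real.sin_le_one _)) self_mem_Ici ht ht
  calc |(x t).1| ≤ |(x 0).1| := hdecay
    _ ≤ |(x 0).1| * Real.exp |(x 0).2| :=
      le_mul_of_one_le_right (abs_nonneg _) (Real.one_le_exp (abs_nonneg _))

/-- For any input u, along any trajectory of the system,
|x₁(t)| ≤ |ξ₁| e^{|ξ₂|} for all t ≥ 0. -/
theorem stmt11 (x : ℝ → ℝ × ℝ) (u : ℝ → ℝ) (hu : Measurable u)
    (hx : ∀ t, 0 ≤ t → HasDerivAt x (fsys (x t) (u t)) t) :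
    ∀ t, 0 ≤ t → |(x t).1| ≤ |(x 0).1| * Real.exp |(x 0).2| :=
  stmt11_general x u hx
end

section
/- If a forward-complete system satisfies the estimate ∫₀^t α(|x(s,ξ,u)|) ds ≤ χ(|ξ| + ∫₀^t σ(|u(s)|) ds) along all trajectories (for some α, χ, σ ∈ K∞), and also the forward-completeness bound |x(t,ξ,u)| ≤ κ₁(t) + κ₂(|ξ|) + κ₃(∫₀^t γ(|u(s)|) ds) + c with κᵢ ∈ K∞, c ≥ 0, then for any r > 0, any initial state with |ξ| ≤ r, and any input with ∫₀^∞ max{γ,σ}(|u(s)|) ds ≤ r, the trajectory satisfies |x(t,ξ,u)| ≤ κ₁(χ(2r)/α(r)) + κ₂(r) + κ₃(r) + c for all t ≥ 0. -/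
open MeasureTheory

/-! Let `τ` be the last time in `[0, t]` at which `‖x‖ ≤ r`. On `(τ, t]` the state stays outside
the ball of radius `r`, so `α r * (t - τ) ≤ ∫₀ᵗ α ‖x‖ ≤ χ (‖ξ‖ + ∫₀ᵗ σ ‖u‖) ≤ χ (2 r)`. Restarting the
system at time `τ`, from a state of norm at most `r`, and applying the forward-completeness bound
over the remaining time `t - τ` gives the claim. -/

namespace ClassK

variable {f : ℝ → ℝ}

theorem mono (hf : ClassK f) {x y : ℝ} (hx : 0 ≤ x) (hxy : x ≤ y) : f x ≤ f y :=
  hf.2.1.monotoneOn hx (hx.trans hxy) hxy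

theorem nonneg_s12 (hf : ClassK f) {x : ℝ} (hx : 0 ≤ x) : 0 ≤ f x :=
  hf.2.2 ▸ hf.mono le_rfl hx

theorem pos_s12 (hf : ClassK f) {x : ℝ} (hx : 0 < x) : 0 < f x :=
  hf.2.2 ▸ hf.2.1 Set.self_mem_Ici hx.le hx

end ClassK

open Set intervalIntegral

theorem exists_last_le_of_continuousOn {f : ℝ → ℝ} {a b r : ℝ} (hab : a ≤ b)
    (hf : ContinuousOn f (Icc a b)) (ha : f a ≤ r) :
    ∃ τ ∈ Icc a b, f τ ≤ r ∧ ∀ s ∈ Ioc τ b, r < f s := by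
  have hS : IsCompact (Icc a b ∩ f ⁻¹' Iic r) :=
    isCompact_Icc.of_isClosed_subset (hf.preimage_isClosed_of_isClosed isClosed_Icc isClosed_Iic)
      inter_subset_left
  obtain ⟨τ, ⟨hτ, hfτ⟩, hmax⟩ := hS.exists_isGreatest ⟨a, ⟨le_rfl, hab⟩, ha⟩
  refine ⟨τ, hτ, hfτ, fun s hs => not_le.mp fun hfs => ?_⟩
  exact hs.1.not_ge (hmax ⟨⟨hτ.1.trans hs.1.le, hs.2⟩, hfs⟩)

theorem sub_le_div_of_le_on_Ioc {f : ℝ → ℝ} {a τ b c M : ℝ} (haτ : a ≤ τ) (hτb : τ ≤ b)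
    (hc : 0 < c) (hfi : IntervalIntegrable f volume a b) (hf0 : ∀ s ∈ Ioc a b, 0 ≤ f s)
    (hcf : ∀ s ∈ Ioc τ b, c ≤ f s) (hM : ∫ s in a..b, f s ≤ M) : b - τ ≤ M / c := by
  rw [le_div_iff₀' hc]
  calc c * (b - τ) ≤ ∫ s in τ..b, f s := by
        have h := setIntegral_ge_of_const_le (c := c) measurableSet_Ioc
          (by simp [Real.volume_Ioc]) hcf (hfi.1.mono_set (Ioc_subset_Ioc_left haτ))
        rwa [measureReal_def, Real.volume_Ioc, ENNReal.toReal_ofReal (sub_nonneg.mpr hτb),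
          smul_eq_mul, mul_comm, ← integral_of_le hτb] at h
    _ ≤ ∫ s in a..b, f s :=
        integral_mono_interval haτ hτb le_rfl (ae_restrict_of_forall_mem measurableSet_Ioc hf0) hfi
    _ ≤ M := hM

theorem intervalIntegral_le_setIntegral_Ioi {g h : ℝ → ℝ} {a₀ a b : ℝ} (ha : a₀ ≤ a)
    (hab : a ≤ b) (hg : ∀ s, 0 ≤ g s) (hgh : ∀ s, g s ≤ h s) (hh : IntegrableOn h (Ioi a₀)) :
    ∫ s in a..b, g s ≤ ∫ s in Ioi a₀, h s := by
  have hsub : Ioc a b ⊆ Ioi a₀ := fun s hs => ha.trans_lt hs.1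
  rw [integral_of_le hab]
  calc ∫ s in Ioc a b, g s ≤ ∫ s in Ioc a b, h s :=
        integral_mono_of_nonneg (.of_forall hg) (hh.mono_set hsub) (.of_forall hgh)
    _ ≤ ∫ s in Ioi a₀, h s :=
        setIntegral_mono_set hh (.of_forall fun s => (hg s).trans (hgh s)) hsub.eventuallyLE

theorem stmt12_general {E F : Type*} [NormedAddCommGroup E] [NormedAddCommGroup F]
    (X : E → (ℝ → F) → ℝ → E)
    (α χ σ γ κ₁ κ₂ κ₃ : ℝ → ℝ) (c : ℝ)
    (hα : ClassKInf α) (hχ : ClassKInf χ) (hσ : ClassKInf σ) (hγ : ClassKInf γ)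
    (hκ₁ : ClassKInf κ₁) (hκ₂ : ClassKInf κ₂) (hκ₃ : ClassKInf κ₃)
    (hX0 : ∀ ξ u, X ξ u 0 = ξ)
    (hcont : ∀ ξ u, ContinuousOn (fun t => X ξ u t) (Set.Ici 0))
    (hshift : ∀ ξ u t s, 0 ≤ t → 0 ≤ s →
      X ξ u (t + s) = X (X ξ u t) (fun τ => u (τ + t)) s)
    (hint : ∀ (ξ : E) (u : ℝ → F) (t : ℝ), 0 ≤ t →
      (∫ s in (0:ℝ)..t, α ‖X ξ u s‖) ≤ χ (‖ξ‖ + ∫ s in (0:ℝ)..t, σ ‖u s‖))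
    (hfc : ∀ (ξ : E) (u : ℝ → F) (t : ℝ), 0 ≤ t →
      ‖X ξ u t‖ ≤ κ₁ t + κ₂ ‖ξ‖ + κ₃ (∫ s in (0:ℝ)..t, γ ‖u s‖) + c)
    (r : ℝ) (hr : 0 < r) (ξ : E) (u : ℝ → F) (hξ : ‖ξ‖ ≤ r)
    (hui : IntegrableOn (fun s => max (γ ‖u s‖) (σ ‖u s‖)) (Set.Ioi 0))
    (hur : (∫ s in Set.Ioi (0:ℝ), max (γ ‖u s‖) (σ ‖u s‖)) ≤ r) :
    ∀ t, 0 ≤ t →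
      ‖X ξ u t‖ ≤ κ₁ (χ (2 * r) / α r) + κ₂ r + κ₃ r + c := by
  intro t ht
  have hx : ContinuousOn (fun s => ‖X ξ u s‖) (Icc 0 t) :=
    ((hcont ξ u).mono Icc_subset_Ici_self).norm
  obtain ⟨τ, ⟨hτ0, hτt⟩, hxτ, hout⟩ :=
    exists_last_le_of_continuousOn ht hx (by simpa only [hX0] using hξ)
  have hσu : ∫ s in (0:ℝ)..t, σ ‖u s‖ ≤ r :=
    (intervalIntegral_le_setIntegral_Ioi le_rfl ht (fun _ => hσ.1.nonneg_s12 (norm_nonneg _))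
      (fun _ => le_max_right _ _) hui).trans hur
  have hγu : ∫ s in (0:ℝ)..(t - τ), γ ‖u (s + τ)‖ ≤ r := by
    rw [integral_comp_add_right (fun s => γ ‖u s‖), zero_add, sub_add_cancel]
    exact (intervalIntegral_le_setIntegral_Ioi hτ0 hτt (fun _ => hγ.1.nonneg_s12 (norm_nonneg _))
      (fun _ => le_max_left _ _) hui).trans hur
  have hdwell : t - τ ≤ χ (2 * r) / α r := by
    refine sub_le_div_of_le_on_Ioc (f := fun s => α ‖X ξ u s‖) hτ0 hτt (hα.1.pos_s12 hr)
      ((hα.1.1.comp hx fun s _ => norm_nonneg _).intervalIntegrable_of_Icc ht)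
      (fun s _ => hα.1.nonneg_s12 (norm_nonneg _))
      (fun s hs => hα.1.mono hr.le (hout s hs).le) ((hint ξ u t ht).trans ?_)
    exact hχ.1.mono (add_nonneg (norm_nonneg _)
      (integral_nonneg ht fun _ _ => hσ.1.nonneg_s12 (norm_nonneg _))) (by linarith)
  calc ‖X ξ u t‖ = ‖X (X ξ u τ) (fun s => u (s + τ)) (t - τ)‖ := by
        rw [← hshift ξ u τ (t - τ) hτ0 (sub_nonneg.mpr hτt), add_sub_cancel]
    _ ≤ κ₁ (t - τ) + κ₂ ‖X ξ u τ‖ + κ₃ (∫ s in (0:ℝ)..(t - τ), γ ‖u (s + τ)‖) + c :=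
        hfc _ _ _ (sub_nonneg.mpr hτt)
    _ ≤ κ₁ (χ (2 * r) / α r) + κ₂ r + κ₃ r + c := by
        gcongr
        · exact hκ₁.1.mono (sub_nonneg.mpr hτt) hdwell
        · exact hκ₂.1.mono (norm_nonneg _) hxτ
        · exact hκ₃.1.mono (integral_nonneg (sub_nonneg.mpr hτt)
            fun _ _ => hγ.1.nonneg_s12 (norm_nonneg _)) hγu

/-- If a forward-complete system satisfies an "integral-to-integral" estimate
∫₀^t α(|x(s)|) ds ≤ χ(|ξ| + ∫₀^t σ(|u(s)|) ds) along all trajectories, and the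
forward-completeness bound |x(t)| ≤ κ₁(t) + κ₂(|ξ|) + κ₃(∫₀^t γ(|u|)) + c, then for any
r > 0, |ξ| ≤ r and ∫₀^∞ max{γ,σ}(|u|) ≤ r imply
|x(t)| ≤ κ₁(χ(2r)/α(r)) + κ₂(r) + κ₃(r) + c for all t ≥ 0. -/
theorem stmt12 {E F : Type*} [NormedAddCommGroup E] [NormedAddCommGroup F]
    (X : E → (ℝ → F) → ℝ → E)
    (α χ σ γ κ₁ κ₂ κ₃ : ℝ → ℝ) (c : ℝ)
    (hα : ClassKInf α) (hχ : ClassKInf χ) (hσ : ClassKInf σ) (hγ : ClassKInf γ)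
    (hκ₁ : ClassKInf κ₁) (hκ₂ : ClassKInf κ₂) (hκ₃ : ClassKInf κ₃) (hc : 0 ≤ c)
    (hX0 : ∀ ξ u, X ξ u 0 = ξ)
    (hcont : ∀ ξ u, ContinuousOn (fun t => X ξ u t) (Set.Ici 0))
    (hshift : ∀ ξ u t s, 0 ≤ t → 0 ≤ s →
      X ξ u (t + s) = X (X ξ u t) (fun τ => u (τ + t)) s)
    (hint : ∀ (ξ : E) (u : ℝ → F) (t : ℝ), 0 ≤ t →
      (∫ s in (0:ℝ)..t, α ‖X ξ u s‖) ≤ χ (‖ξ‖ + ∫ s in (0:ℝ)..t, σ ‖u s‖))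
    (hfc : ∀ (ξ : E) (u : ℝ → F) (t : ℝ), 0 ≤ t →
      ‖X ξ u t‖ ≤ κ₁ t + κ₂ ‖ξ‖ + κ₃ (∫ s in (0:ℝ)..t, γ ‖u s‖) + c)
    (r : ℝ) (hr : 0 < r) (ξ : E) (u : ℝ → F) (hξ : ‖ξ‖ ≤ r)
    (hui : IntegrableOn (fun s => max (γ ‖u s‖) (σ ‖u s‖)) (Set.Ioi 0))
    (hur : (∫ s in Set.Ioi (0:ℝ), max (γ ‖u s‖) (σ ‖u s‖)) ≤ r) :
    ∀ t, 0 ≤ t →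
      ‖X ξ u t‖ ≤ κ₁ (χ (2 * r) / α r) + κ₂ r + κ₃ r + c :=
  stmt12_general X α χ σ γ κ₁ κ₂ κ₃ c hα hχ hσ hγ hκ₁ hκ₂ hκ₃ hX0 hcont hshift hint hfc r hr ξ u hξ
    hui hur
end

section
/- Let V : ℝⁿ → [0,∞) be defined by V(ξ) := sup over t ≥ 0 and inputs u of [α(|x(t,ξ,u)|) − ∫₀^t σ₁(|u(s)|) ds], where σ₁ ∈ K∞. If the system satisfies the UBEBS estimate α(|x(t,ξ,u)|) ≤ γ(|ξ|) + ∫₀^t σ₁(|u(s)|) ds with α, γ ∈ K∞, then V is finite-valued and satisfies α(|ξ|) ≤ V(ξ) ≤ γ(|ξ|) for all ξ, and V(x(t,ξ,u)) − V(ξ) ≤ ∫₀^t σ₁(|u(s)|) ds along all trajectories. -/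
open MeasureTheory

/-- Admissible inputs: those for which s ↦ σ₁(‖u s‖) is interval-integrable. -/
def Admissible {F : Type*} [NormedAddCommGroup F] (σ₁ : ℝ → ℝ) (u : ℝ → F) : Prop :=
  ∀ a b : ℝ, IntervalIntegrable (fun s => σ₁ ‖u s‖) volume a b

/-- The set of values α(|x(t,ξ,u)|) − ∫₀^t σ₁(|u(s)|) ds over t ≥ 0 and admissible u. -/
def Sset {E F : Type*} [NormedAddCommGroup E] [NormedAddCommGroup F]
    (X : E → (ℝ → F) → ℝ → E) (α σ₁ : ℝ → ℝ) (ξ : E) : Set ℝ :=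
  {v | ∃ (t : ℝ) (u : ℝ → F), 0 ≤ t ∧ Admissible σ₁ u ∧
    v = α ‖X ξ u t‖ - ∫ s in (0:ℝ)..t, σ₁ ‖u s‖}

/-- V(ξ) := sup over t ≥ 0 and admissible inputs u of α(|x(t,ξ,u)|) − ∫₀^t σ₁(|u(s)|) ds. -/
noncomputable def Vfun {E F : Type*} [NormedAddCommGroup E] [NormedAddCommGroup F]
    (X : E → (ℝ → F) → ℝ → E) (α σ₁ : ℝ → ℝ) (ξ : E) : ℝ :=
  sSup (Sset X α σ₁ ξ)

lemma adm_zero {F : Type*} [NormedAddCommGroup F] {σ₁ : ℝ → ℝ} (h0 : σ₁ 0 = 0) :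
    Admissible σ₁ (fun _ : ℝ => (0 : F)) := by
  intro a b
  simp only [norm_zero, h0]
  exact intervalIntegrable_const

lemma adm_concat {F : Type*} [NormedAddCommGroup F] {σ₁ : ℝ → ℝ} {u w : ℝ → F} (t : ℝ)
    (hu : Admissible σ₁ u) (hw : Admissible σ₁ w) :
    Admissible σ₁ (fun s => if s < t then u s else w (s - t)) := by
  intro a b
  have h1 : IntegrableOn (fun s => σ₁ ‖u s‖) (Set.uIoc a b) volume :=
    intervalIntegrable_iff.mp (hu a b)
  have h2 : IntegrableOn (fun s => σ₁ ‖w (s - t)‖) (Set.uIoc a b) volume := by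
    have := ((hw (a - t) (b - t)).comp_sub_right t)
    simp only [sub_add_cancel] at this
    exact intervalIntegrable_iff.mp this
  rw [intervalIntegrable_iff]
  have key : Set.uIoc a b = (Set.uIoc a b ∩ Set.Iio t) ∪ (Set.uIoc a b ∩ Set.Ici t) := by
    rw [← Set.inter_union_distrib_left, Set.Iio_union_Ici, Set.inter_univ]
  rw [key]
  refine IntegrableOn.union ?_ ?_
  · refine (h1.mono_set Set.inter_subset_left).congr_fun ?_
      (measurableSet_uIoc.inter measurableSet_Iio)
    intro s hs
    have h : s < t := hs.2
    simp [h]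
  · refine (h2.mono_set Set.inter_subset_left).congr_fun ?_
      (measurableSet_uIoc.inter measurableSet_Ici)
    intro s hs
    have h : ¬ s < t := not_lt.mpr hs.2
    simp [h]

lemma integral_concat {F : Type*} [NormedAddCommGroup F] {σ₁ : ℝ → ℝ} {u w : ℝ → F} {t τ : ℝ}
    (ht : 0 ≤ t) (hτ : 0 ≤ τ) (hu : Admissible σ₁ u) (hw : Admissible σ₁ w) :
    (∫ s in (0:ℝ)..(t + τ), σ₁ ‖(fun s => if s < t then u s else w (s - t)) s‖) =
      (∫ s in (0:ℝ)..t, σ₁ ‖u s‖) + ∫ s in (0:ℝ)..τ, σ₁ ‖w s‖ := by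
  have hadm := adm_concat t hu hw
  rw [← intervalIntegral.integral_add_adjacent_intervals (hadm 0 t) (hadm t (t + τ))]
  congr 1
  · apply intervalIntegral.integral_congr_ae
    have hnt : ∀ᵐ s : ℝ, s ≠ t := by
      rw [MeasureTheory.ae_iff]
      simp only [not_not]
      have : {s : ℝ | s = t} = {t} := by ext s; simp
      rw [this]
      exact measure_singleton t
    filter_upwards [hnt] with s hst hs
    rw [Set.uIoc_of_le ht] at hs
    simp [if_pos (lt_of_le_of_ne hs.2 hst)]
  · have heq : ∫ s in t..(t + τ), σ₁ ‖(fun s => if s < t then u s else w (s - t)) s‖ =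
        ∫ s in t..(t + τ), σ₁ ‖w (s - t)‖ := by
      apply intervalIntegral.integral_congr
      intro s hs
      rw [Set.uIcc_of_le (by linarith)] at hs
      simp [if_neg (not_lt.mpr hs.1)]
    rw [heq, intervalIntegral.integral_comp_sub_right (fun s => σ₁ ‖w s‖) t]
    norm_num

/-- Under a UBEBS estimate, the value function V is finite-valued, satisfies
α(|ξ|) ≤ V(ξ) ≤ γ(|ξ|), and decreases along trajectories up to the input energy. -/
theorem stmt13 {E F : Type*} [NormedAddCommGroup E] [NormedAddCommGroup F]
    (X : E → (ℝ → F) → ℝ → E) (α γ σ₁ : ℝ → ℝ)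
    (hα : ClassKInf α) (hγ : ClassKInf γ) (hσ₁ : ClassKInf σ₁)
    (hX0 : ∀ ξ u, X ξ u 0 = ξ)
    (hconcat : ∀ (ξ : E) (u v : ℝ → F) (t τ : ℝ), 0 ≤ t → 0 ≤ τ →
      X (X ξ u t) v τ = X ξ (fun s => if s < t then u s else v (s - t)) (t + τ))
    (hUBEBS : ∀ (ξ : E) (u : ℝ → F) (t : ℝ), 0 ≤ t →
      α ‖X ξ u t‖ ≤ γ ‖ξ‖ + ∫ s in (0:ℝ)..t, σ₁ ‖u s‖) :
    (∀ ξ : E, BddAbove (Sset X α σ₁ ξ)) ∧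
    (∀ ξ : E, α ‖ξ‖ ≤ Vfun X α σ₁ ξ ∧ Vfun X α σ₁ ξ ≤ γ ‖ξ‖) ∧
    (∀ (ξ : E) (u : ℝ → F), Admissible σ₁ u → ∀ t, 0 ≤ t →
      Vfun X α σ₁ (X ξ u t) - Vfun X α σ₁ ξ ≤ ∫ s in (0:ℝ)..t, σ₁ ‖u s‖) := by
  have hσ0 : σ₁ 0 = 0 := hσ₁.1.2.2
  have hmem : ∀ ξ : E, α ‖ξ‖ ∈ Sset X α σ₁ ξ := by
    intro ξ
    refine ⟨0, fun _ => 0, le_refl 0, adm_zero hσ0, ?_⟩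
    simp [hX0]
  have hbdd : ∀ ξ : E, BddAbove (Sset X α σ₁ ξ) := by
    intro ξ
    refine ⟨γ ‖ξ‖, ?_⟩
    rintro v ⟨t, u, ht, hu, rfl⟩
    have := hUBEBS ξ u t ht
    linarith
  refine ⟨hbdd, ?_, ?_⟩
  · intro ξ
    constructor
    · exact le_csSup (hbdd ξ) (hmem ξ)
    · refine csSup_le ⟨_, hmem ξ⟩ ?_
      rintro v ⟨t, u, ht, hu, rfl⟩
      have := hUBEBS ξ u t ht
      linarith
  · intro ξ u hu t ht
    rw [sub_le_iff_le_add]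
    refine csSup_le ⟨_, hmem (X ξ u t)⟩ ?_
    rintro v ⟨τ, w, hτ, hw, rfl⟩
    have hel : α ‖X (X ξ u t) w τ‖ - (∫ s in (0:ℝ)..τ, σ₁ ‖w s‖) -
        (∫ s in (0:ℝ)..t, σ₁ ‖u s‖) ∈ Sset X α σ₁ ξ := by
      refine ⟨t + τ, fun s => if s < t then u s else w (s - t), by linarith,
        adm_concat t hu hw, ?_⟩
      rw [hconcat ξ u w t τ ht hτ, integral_concat ht hτ hu hw]
      ring
    have := le_csSup (hbdd ξ) hel
    unfold Vfun
    linarith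
end

section
/- Let α, γ ∈ K∞ satisfy γ(φ(s)) ≤ α(s)/2 for all s ≥ 0, where φ ∈ K∞. Suppose a trajectory x(·) and input u satisfy |u(τ)| ≤ φ(|x(τ)|) for all τ ∈ [0,t], together with the bound α(|x(τ)|) ≤ β₀(|ξ|) + ∫₀^τ γ(|u(s)|) ds + γ(‖u‖_{∞,[0,τ]}) for all τ ∈ [0,t], with β₀ ∈ K∞. Then α(sup_{τ∈[0,t]} |x(τ)|) ≤ 2β₀(|ξ|) + 2∫₀^t γ(|u(s)|) ds. -/
open MeasureTheory

/-- Small-gain absorption: if γ(φ(s)) ≤ α(s)/2, the input satisfies |u(τ)| ≤ φ(|x(τ)|), and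
α(|x(τ)|) ≤ β₀(|ξ|) + ∫₀^τ γ(|u|) + γ(‖u‖_{∞,[0,τ]}) on [0,t], then
α(sup_{[0,t]}|x|) ≤ 2β₀(|ξ|) + 2∫₀^t γ(|u|). -/
theorem stmt17 {E F : Type*} [NormedAddCommGroup E] [NormedAddCommGroup F]
    (x : ℝ → E) (u : ℝ → F) (t : ℝ) (ht : 0 ≤ t)
    (α β₀ γ φ : ℝ → ℝ)
    (hα : ClassKInf α) (hβ₀ : ClassKInf β₀) (hγ : ClassKInf γ) (hφ : ClassKInf φ)
    (hγφ : ∀ s : ℝ, 0 ≤ s → γ (φ s) ≤ α s / 2)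
    (hxcont : ContinuousOn x (Set.Icc 0 t))
    (hu : ∀ τ ∈ Set.Icc (0:ℝ) t, ‖u τ‖ ≤ φ ‖x τ‖)
    (hint : IntervalIntegrable (fun s => γ ‖u s‖) volume 0 t)
    (hbound : ∀ τ ∈ Set.Icc (0:ℝ) t,
      α ‖x τ‖ ≤ β₀ ‖x 0‖ + (∫ s in (0:ℝ)..τ, γ ‖u s‖) +
        γ (sSup ((fun s => ‖u s‖) '' Set.Icc 0 τ))) :
    α (sSup ((fun s => ‖x s‖) '' Set.Icc 0 t)) ≤
      2 * β₀ ‖x 0‖ + 2 * ∫ s in (0:ℝ)..t, γ ‖u s‖ := by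
  obtain ⟨⟨hγc, hγm, hγ0⟩, -⟩ := hγ
  obtain ⟨⟨hαc, hαm, hα0⟩, -⟩ := hα
  obtain ⟨⟨hφc, hφm, hφ0⟩, -⟩ := hφ
  have hIccne : (Set.Icc (0:ℝ) t).Nonempty := ⟨0, le_refl 0, ht⟩
  have hxn : ContinuousOn (fun s => ‖x s‖) (Set.Icc 0 t) := hxcont.norm
  have hcomp : IsCompact ((fun s => ‖x s‖) '' Set.Icc 0 t) :=
    (isCompact_Icc).image_of_continuousOn hxn
  have hne : ((fun s => ‖x s‖) '' Set.Icc 0 t).Nonempty := hIccne.image _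
  set M := sSup ((fun s => ‖x s‖) '' Set.Icc 0 t) with hM
  have hMmem : M ∈ (fun s => ‖x s‖) '' Set.Icc 0 t := hcomp.sSup_mem hne
  obtain ⟨τ₀, hτ₀, hxτ₀⟩ := hMmem
  have hbdd : BddAbove ((fun s => ‖x s‖) '' Set.Icc 0 t) := hcomp.bddAbove
  have hM0 : 0 ≤ M := hxτ₀ ▸ norm_nonneg _
  have hxleM : ∀ s ∈ Set.Icc (0:ℝ) t, ‖x s‖ ≤ M := fun s hs =>
    le_csSup hbdd ⟨s, hs, rfl⟩
  have hsubτ₀ : Set.Icc (0:ℝ) τ₀ ⊆ Set.Icc 0 t :=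
    Set.Icc_subset_Icc le_rfl hτ₀.2
  have hune : ((fun s => ‖u s‖) '' Set.Icc 0 τ₀).Nonempty :=
    (Set.nonempty_Icc.2 hτ₀.1).image _
  have huub : ∀ y ∈ (fun s => ‖u s‖) '' Set.Icc 0 τ₀, y ≤ φ M := by
    rintro y ⟨s, hs, rfl⟩
    exact (hu s (hsubτ₀ hs)).trans
      (hφm.monotoneOn (Set.mem_Ici.2 (norm_nonneg _)) (Set.mem_Ici.2 hM0)
        (hxleM s (hsubτ₀ hs)))
  have hsupu_le : sSup ((fun s => ‖u s‖) '' Set.Icc 0 τ₀) ≤ φ M :=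
    csSup_le hune huub
  have hsupu0 : 0 ≤ sSup ((fun s => ‖u s‖) '' Set.Icc 0 τ₀) := by
    obtain ⟨y, s, hs, rfl⟩ := hune
    exact le_trans (norm_nonneg _) (le_csSup ⟨φ M, huub⟩ ⟨s, hs, rfl⟩)
  have hφM0 : 0 ≤ φ M := le_trans hsupu0 hsupu_le
  have hγsup : γ (sSup ((fun s => ‖u s‖) '' Set.Icc 0 τ₀)) ≤ α M / 2 := by
    refine le_trans ?_ (hγφ M hM0)
    exact hγm.monotoneOn (Set.mem_Ici.2 hsupu0) (Set.mem_Ici.2 hφM0) hsupu_le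
  -- nonnegativity of the integrand
  have hγnn : ∀ s : ℝ, 0 ≤ γ ‖u s‖ := fun s => by
    have := hγm.monotoneOn (Set.self_mem_Ici) (Set.mem_Ici.2 (norm_nonneg (u s)))
      (norm_nonneg _)
    simpa [hγ0] using this
  have hintτ₀ : ∫ s in (0:ℝ)..τ₀, γ ‖u s‖ ≤ ∫ s in (0:ℝ)..t, γ ‖u s‖ := by
    apply intervalIntegral.integral_mono_interval le_rfl hτ₀.1 hτ₀.2
    · filter_upwards with s using hγnn s
    · exact hint
  have hb := hbound τ₀ hτ₀
  simp only at hxτ₀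
  rw [hxτ₀] at hb
  have key : α M ≤ β₀ ‖x 0‖ + (∫ s in (0:ℝ)..t, γ ‖u s‖) + α M / 2 := by
    calc α M ≤ β₀ ‖x 0‖ + (∫ s in (0:ℝ)..τ₀, γ ‖u s‖) +
        γ (sSup ((fun s => ‖u s‖) '' Set.Icc 0 τ₀)) := hb
      _ ≤ β₀ ‖x 0‖ + (∫ s in (0:ℝ)..t, γ ‖u s‖) + α M / 2 := by
          gcongr
  linarith
end
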